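/- arXiv:1506.02335 — 8 statements merged into one kernel-verified Lean document; each statement's English description precedes it below -/
import Mathlib

section
/- Let f₁,…,f_m ∈ ℝ[x] be polynomials of the same degree n with positive leading coefficients. Then f₁,…,f_m have a common interlacing if and only if every convex combination λ₁f₁ + ⋯ + λ_m f_m (with λ_i ≥ 0, Σλ_i = 1) is real-rooted. -/
/-!
For the forward direction, move the `k`-th root of every `f j` down by `2kε`: the common
interlacing becomes strict, so a convex combination alternates in sign at the `n + 1` interlacing
points and has `n` simple real roots. As `ε → 0` these sorted roots stay bounded, and a limit point
of them is a full list of roots of the unperturbed combination.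

For the converse take `β i = minⱼ ρ j i`; it suffices that `ρ j i ≤ ρ k (i - 1)` for all `j, k`.
Otherwise pick `c` strictly between `ρ k (i - 1)` and `ρ j i`, avoiding the zeros of `f j`, `f k`
and of their Wronskian `W`. Along `t ↦ (1 - t) f j + t f k` the sorted roots move continuously and
the number of roots above `c` drops by at least two, while the value at `c`, affine in `t`, vanishes
for at most one `T`. Hence `c` is a multiple root at `T`, which forces `W(c) = 0`; and `W = 0`
would make `f j` and `f k` proportional.
-/

open Polynomial Filter Topology Finset

lemma neg_one_pow_mul_prod_sub_pos {n K : ℕ} {r : Fin n → ℝ} {x : ℝ} (hK : K ≤ n)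
    (hlt : ∀ i : Fin n, (i : ℕ) < K → x < r i) (hgt : ∀ i : Fin n, K ≤ (i : ℕ) → r i < x) :
    0 < (-1) ^ K * ∏ i, (x - r i) := by
  have hsign : ∏ i : Fin n, (if (i : ℕ) < K then (-1 : ℝ) else 1) = (-1) ^ K := by
    rw [prod_ite, prod_const, prod_const_one, mul_one, Fin.card_filter_val_lt, min_eq_right hK]
  rw [← hsign, ← prod_mul_distrib]
  refine prod_pos fun i _ => ?_
  split_ifs with h
  · linarith [hlt i h]
  · linarith [hgt i (not_lt.mp h)]

lemma exists_mem_Ioo_eq_zero_of_mul_neg {f : ℝ → ℝ} {a b : ℝ} (hab : a ≤ b)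
    (hf : ContinuousOn f (Set.Icc a b)) (h : f a * f b < 0) : ∃ c ∈ Set.Ioo a b, f c = 0 := by
  rcases mul_neg_iff.mp h with ⟨ha, hb⟩ | ⟨ha, hb⟩
  · exact intermediate_value_Ioo' hab hf ⟨hb, ha⟩
  · exact intermediate_value_Ioo hab hf ⟨ha, hb⟩

lemma MapClusterPt.eq_of_tendsto {X α : Type*} [TopologicalSpace X] [T2Space X] {l : Filter α}
    {f : α → X} {a b : X} (ha : MapClusterPt a l f) (hb : Tendsto f l (𝓝 b)) : a = b :=
  eq_of_nhds_neBot (ha.neBot.mono (inf_le_inf_left _ hb))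

namespace Polynomial

section Domain

variable {R : Type*} [CommRing R] [IsDomain R] {n : ℕ}

lemma roots_fin_prod_X_sub_C (v : Fin n → R) :
    (∏ i, (X - C (v i))).roots = (List.ofFn v : Multiset R) := by
  simp [roots_prod, prod_ne_zero_iff, X_sub_C_ne_zero, Fin.univ_val_map]

lemma natDegree_fin_prod_X_sub_C (v : Fin n → R) :
    (∏ i, (X - C (v i))).natDegree = n := by
  simp [natDegree_prod_of_monic, monic_X_sub_C]

lemma natDegree_leadingCoeff_C_mul_fin_prod_X_sub_C {c : R} (hc : c ≠ 0) (v : Fin n → R) :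
    (C c * ∏ i, (X - C (v i))).natDegree = n ∧ (C c * ∏ i, (X - C (v i))).leadingCoeff = c := by
  refine ⟨by rw [natDegree_C_mul hc, natDegree_fin_prod_X_sub_C], ?_⟩
  rw [leadingCoeff_mul, leadingCoeff_C,
    (monic_prod_of_monic _ _ fun i _ => monic_X_sub_C (v i)).leadingCoeff, mul_one]

end Domain

lemma natDegree_leadingCoeff_sum_C_mul {R ι : Type*} [CommRing R] [Fintype ι] {n : ℕ}
    {f : ι → R[X]} {w c : ι → R} (hf : ∀ j, (f j).natDegree = n ∧ (f j).leadingCoeff = c j)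
    (hne : ∑ j, w j * c j ≠ 0) :
    (∑ j, C (w j) * f j).natDegree = n ∧ (∑ j, C (w j) * f j).leadingCoeff = ∑ j, w j * c j := by
  have hcoeff : (∑ j, C (w j) * f j).coeff n = ∑ j, w j * c j := by
    simp only [finsetSum_coeff, coeff_C_mul]
    exact sum_congr rfl fun j _ => by rw [← (hf j).2, leadingCoeff, (hf j).1]
  have hdeg : (∑ j, C (w j) * f j).natDegree = n :=
    natDegree_eq_of_le_of_coeff_ne_zero (natDegree_sum_le_of_forall_le _ _ fun j _ =>
      (natDegree_C_mul_le _ _).trans (hf j).1.le) (hcoeff ▸ hne)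
  exact ⟨hdeg, by rw [leadingCoeff, hdeg, hcoeff]⟩

-- Only meaningful when `p.roots.card = n`: otherwise the list is truncated or padded with `0`.
noncomputable def sortedRoots (p : ℝ[X]) (n : ℕ) (i : Fin n) : ℝ :=
  (p.roots.sort (· ≥ ·)).getD i 0

section SortedRoots

variable {p : ℝ[X]} {n : ℕ}

lemma ofFn_sortedRoots (hp : p.roots.card = n) :
    List.ofFn (p.sortedRoots n) = p.roots.sort (· ≥ ·) := by
  refine List.ext_getElem (by simp [hp]) fun i _ h => ?_
  simp [sortedRoots, List.getElem?_eq_getElem h]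

lemma coe_ofFn_sortedRoots (hp : p.roots.card = n) :
    (List.ofFn (p.sortedRoots n) : Multiset ℝ) = p.roots := by
  rw [ofFn_sortedRoots hp, Multiset.sort_eq]

lemma antitone_sortedRoots (hp : p.roots.card = n) : Antitone (p.sortedRoots n) := by
  have h := Multiset.pairwise_sort p.roots (· ≥ ·)
  rw [← ofFn_sortedRoots hp, List.pairwise_ofFn] at h
  exact antitone_iff_forall_lt.mpr fun i j hij => h hij

lemma eq_sortedRoots {r : Fin n → ℝ} (hr : Antitone r)
    (h : (List.ofFn r : Multiset ℝ) = p.roots) : r = p.sortedRoots n := by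
  have hp : p.roots.card = n := by simp [← h]
  refine List.ofFn_injective (List.Perm.eq_of_pairwise' (r := (· ≥ ·)) ?_ ?_ ?_)
  · exact List.pairwise_ofFn.mpr fun i j hij => hr hij.le
  · exact List.pairwise_ofFn.mpr fun i j hij => antitone_sortedRoots hp hij.le
  · exact Multiset.coe_eq_coe.mp (h.trans (coe_ofFn_sortedRoots hp).symm)

lemma sortedRoots_mem_roots (hp : p.roots.card = n) (i : Fin n) :
    p.sortedRoots n i ∈ p.roots := by
  rw [← coe_ofFn_sortedRoots hp]
  exact Multiset.mem_coe.mpr (List.mem_ofFn.mpr ⟨i, rfl⟩)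

lemma count_roots_eq_card_sortedRoots (hp : p.roots.card = n) (c : ℝ) :
    p.roots.count c = #{i | p.sortedRoots n i = c} := by
  rw [← coe_ofFn_sortedRoots hp, ← Fin.univ_val_map, Multiset.count_map]
  simp only [eq_comm (a := c)]
  rfl

lemma C_leadingCoeff_mul_prod_X_sub_C_sortedRoots (hdeg : p.natDegree = n)
    (hp : p.roots.card = n) : C p.leadingCoeff * ∏ i, (X - C (p.sortedRoots n i)) = p := by
  conv_rhs => rw [← C_leadingCoeff_mul_prod_multiset_X_sub_C (hp.trans hdeg.symm),
    ← coe_ofFn_sortedRoots hp]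
  rw [Multiset.map_coe, Multiset.prod_coe, List.map_ofFn, List.prod_ofFn]
  rfl

lemma eval_eq_leadingCoeff_mul_prod_sub_sortedRoots (hdeg : p.natDegree = n)
    (hp : p.roots.card = n) (x : ℝ) :
    p.eval x = p.leadingCoeff * ∏ i, (x - p.sortedRoots n i) := by
  conv_lhs => rw [← C_leadingCoeff_mul_prod_X_sub_C_sortedRoots hdeg hp]
  simp [eval_prod]

lemma eval_pos_of_forall_roots_lt (hdeg : p.natDegree = n) (hp : p.roots.card = n)
    (hlc : 0 < p.leadingCoeff) {x : ℝ} (hx : ∀ y ∈ p.roots, y < x) : 0 < p.eval x := by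
  have := neg_one_pow_mul_prod_sub_pos (K := 0) (r := p.sortedRoots n) (x := x) (Nat.zero_le n)
    (by simp) fun i _ => hx _ (sortedRoots_mem_roots hp i)
  rw [pow_zero, one_mul] at this
  rw [eval_eq_leadingCoeff_mul_prod_sub_sortedRoots hdeg hp]
  positivity

lemma neg_one_pow_mul_eval_pos_of_forall_lt_roots (hdeg : p.natDegree = n)
    (hp : p.roots.card = n) (hlc : 0 < p.leadingCoeff) {x : ℝ} (hx : ∀ y ∈ p.roots, x < y) :
    0 < (-1) ^ n * p.eval x := by
  have := neg_one_pow_mul_prod_sub_pos (K := n) (r := p.sortedRoots n) (x := x) le_rfl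
    (fun i _ => hx _ (sortedRoots_mem_roots hp i)) fun i hi => absurd i.isLt (not_lt.mpr hi)
  rw [eval_eq_leadingCoeff_mul_prod_sub_sortedRoots hdeg hp, mul_left_comm]
  positivity

end SortedRoots

end Polynomial

section Compactness

variable {ι : Type*} {l : Filter ι} {n : ℕ} {r : ι → Fin n → ℝ}

lemma prod_sub_eq_of_mapClusterPt {v : Fin n → ℝ} {φ : ℝ → ℝ} (hv : MapClusterPt v l r)
    (h : ∀ x, Tendsto (fun k => ∏ i, (x - r k i)) l (𝓝 (φ x))) (x : ℝ) :
    ∏ i, (x - v i) = φ x :=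
  (hv.continuousAt_comp (f := fun u : Fin n → ℝ => ∏ i, (x - u i))
    (continuous_finsetProd _ fun i _ => continuous_const.sub (continuous_apply i)).continuousAt
    ).eq_of_tendsto (h x)

lemma eq_of_forall_prod_sub_eq {v w : Fin n → ℝ} (hv : Antitone v) (hw : Antitone w)
    (h : ∀ x, ∏ i, (x - v i) = ∏ i, (x - w i)) : v = w := by
  have hvw : ∏ i, (X - C (v i)) = ∏ i, (X - C (w i)) :=
    Polynomial.funext fun x => by simpa [eval_prod] using h x
  rw [eq_sortedRoots hv (roots_fin_prod_X_sub_C v).symm,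
    eq_sortedRoots hw (roots_fin_prod_X_sub_C w).symm, hvw]

lemma isCompact_setOf_antitone_mem_Icc (a b : ℝ) :
    IsCompact {v : Fin n → ℝ | (∀ i, v i ∈ Set.Icc a b) ∧ Antitone v} := by
  have := (isCompact_univ_pi fun _ : Fin n => isCompact_Icc (a := a) (b := b)).inter_right
    isClosed_antitone
  simpa [Set.pi, Set.ofPred_and] using this

lemma exists_prod_sub_eq_of_tendsto [l.NeBot] {a b : ℝ} {φ : ℝ → ℝ}
    (hr : ∀ᶠ k in l, (∀ i, r k i ∈ Set.Icc a b) ∧ Antitone (r k))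
    (h : ∀ x, Tendsto (fun k => ∏ i, (x - r k i)) l (𝓝 (φ x))) :
    ∃ v : Fin n → ℝ, ∀ x, ∏ i, (x - v i) = φ x := by
  obtain ⟨v, -, hv⟩ :=
    (isCompact_setOf_antitone_mem_Icc a b).exists_mapClusterPt (tendsto_principal.mpr hr)
  exact ⟨v, prod_sub_eq_of_mapClusterPt hv h⟩

lemma tendsto_of_tendsto_prod_sub {a b : ℝ} {w : Fin n → ℝ}
    (hr : ∀ᶠ k in l, (∀ i, r k i ∈ Set.Icc a b) ∧ Antitone (r k)) (hw : Antitone w)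
    (h : ∀ x, Tendsto (fun k => ∏ i, (x - r k i)) l (𝓝 (∏ i, (x - w i)))) :
    Tendsto r l (𝓝 w) :=
  (isCompact_setOf_antitone_mem_Icc a b).tendsto_nhds_of_unique_mapClusterPt hr
    fun _ hvK hv => eq_of_forall_prod_sub_eq hvK.2 hw (prod_sub_eq_of_mapClusterPt hv h)

end Compactness

namespace Polynomial

section Limits

variable {ι : Type*} {l : Filter ι} {n : ℕ} {q : ι → ℝ[X]} {p : ℝ[X]} {L : ℝ}

lemma tendsto_prod_sub_sortedRoots (hq : ∀ᶠ k in l, (q k).natDegree = n ∧ (q k).roots.card = n)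
    (hL : L ≠ 0) (hlc : Tendsto (fun k => (q k).leadingCoeff) l (𝓝 L))
    (heval : ∀ x, Tendsto (fun k => (q k).eval x) l (𝓝 (p.eval x))) (x : ℝ) :
    Tendsto (fun k => ∏ i, (x - (q k).sortedRoots n i)) l (𝓝 (p.eval x / L)) := by
  refine ((heval x).div hlc hL).congr' ?_
  filter_upwards [hq, hlc.eventually_ne hL] with k ⟨hdeg, hcard⟩ hk
  rw [Pi.div_apply, eval_eq_leadingCoeff_mul_prod_sub_sortedRoots hdeg hcard,
    mul_div_cancel_left₀ _ hk]

lemma card_roots_eq_of_tendsto_eval [l.NeBot] {a b : ℝ}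
    (hq : ∀ᶠ k in l, (q k).natDegree = n ∧ (q k).roots.card = n ∧
      ∀ x ∈ (q k).roots, x ∈ Set.Icc a b)
    (hL : L ≠ 0) (hlc : Tendsto (fun k => (q k).leadingCoeff) l (𝓝 L))
    (heval : ∀ x, Tendsto (fun k => (q k).eval x) l (𝓝 (p.eval x))) :
    p.roots.card = n := by
  obtain ⟨v, hv⟩ := exists_prod_sub_eq_of_tendsto
    (hq.mono fun k hk => ⟨fun i => hk.2.2 _ (sortedRoots_mem_roots hk.2.1 i),
      antitone_sortedRoots hk.2.1⟩)
    (tendsto_prod_sub_sortedRoots (hq.mono fun k hk => ⟨hk.1, hk.2.1⟩) hL hlc heval)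
  have hp : p = C L * ∏ i, (X - C (v i)) := Polynomial.funext fun x => by
    simp [eval_prod, hv, mul_div_cancel₀ _ hL]
  simp [hp, roots_C_mul _ hL, roots_fin_prod_X_sub_C]

lemma continuousOn_sortedRoots {X : Type*} [TopologicalSpace X] {h : X → ℝ[X]} {s : Set X}
    {a b : ℝ} (hh : ∀ t ∈ s, (h t).natDegree = n ∧ (h t).roots.card = n ∧
      ∀ x ∈ (h t).roots, x ∈ Set.Icc a b)
    (hlc : ContinuousOn (fun t => (h t).leadingCoeff) s) (hlc₀ : ∀ t ∈ s, (h t).leadingCoeff ≠ 0)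
    (heval : ∀ x, ContinuousOn (fun t => (h t).eval x) s) :
    ContinuousOn (fun t => (h t).sortedRoots n) s := by
  intro t₀ ht₀
  obtain ⟨hdeg, hcard, -⟩ := hh t₀ ht₀
  have hs : ∀ᶠ t in 𝓝[s] t₀, t ∈ s := self_mem_nhdsWithin
  refine tendsto_of_tendsto_prod_sub (hs.mono fun t ht => ⟨fun i =>
      (hh t ht).2.2 _ (sortedRoots_mem_roots (hh t ht).2.1 i), antitone_sortedRoots (hh t ht).2.1⟩)
    (antitone_sortedRoots hcard) fun x => ?_
  have := tendsto_prod_sub_sortedRoots (hs.mono fun t ht => ⟨(hh t ht).1, (hh t ht).2.1⟩)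
    (hlc₀ t₀ ht₀) (hlc t₀ ht₀) (fun x => heval x t₀ ht₀) x
  rwa [eval_eq_leadingCoeff_mul_prod_sub_sortedRoots hdeg hcard,
    mul_div_cancel_left₀ _ (hlc₀ t₀ ht₀)] at this

end Limits

section StrictInterlacing

lemma roots_eq_ofFn_of_neg_one_pow_mul_eval_pos {p : ℝ[X]} {n : ℕ} (hdeg : p.natDegree ≤ n)
    {z : Fin (n + 1) → ℝ} (hz : StrictAnti z)
    (hsign : ∀ k : Fin (n + 1), 0 < (-1) ^ (k : ℕ) * p.eval (z k)) :
    ∃ y : Fin n → ℝ, (∀ k, y k ∈ Set.Ioo (z k.succ) (z k.castSucc)) ∧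
      (List.ofFn y : Multiset ℝ) = p.roots := by
  have hroot : ∀ k : Fin n, ∃ y ∈ Set.Ioo (z k.succ) (z k.castSucc), p.eval y = 0 := by
    intro k
    refine exists_mem_Ioo_eq_zero_of_mul_neg (hz (Fin.castSucc_lt_succ (i := k))).le
      p.continuousOn ?_
    have h := mul_pos (hsign k.succ) (hsign k.castSucc)
    have hsq : (-1 : ℝ) ^ (k : ℕ) * (-1) ^ (k : ℕ) = 1 := by rw [← mul_pow]; norm_num
    simp only [Fin.val_succ, Fin.val_castSucc, pow_succ] at h
    nlinarith
  choose y hy hy₀ using hroot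
  have hanti : StrictAnti y := fun k k' hkk' =>
    calc y k' < z k'.castSucc := (hy k').2
      _ ≤ z k.succ := hz.antitone (Fin.succ_le_castSucc_iff.mpr hkk')
      _ < y k := (hy k).1
  have hp : p ≠ 0 := by
    rintro rfl
    simpa using hsign 0
  refine ⟨y, hy, Multiset.eq_of_le_of_card_le ?_ ?_⟩
  · rw [Multiset.le_iff_subset (Multiset.coe_nodup.mpr (List.nodup_ofFn.mpr hanti.injective))]
    intro x hx
    obtain ⟨k, rfl⟩ := List.mem_ofFn.mp (Multiset.mem_coe.mp hx)
    exact (mem_roots hp).mpr (hy₀ k)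
  · simpa using (card_roots' p).trans hdeg

lemma roots_sum_C_mul_eq_ofFn_of_strict_interlacing {ι : Type*} [Fintype ι] {n : ℕ} {w c : ι → ℝ}
    {r : ι → Fin n → ℝ} (hw : ∀ j, 0 ≤ w j) (hpos : ∃ j, 0 < w j) (hc : ∀ j, 0 < c j)
    {z : Fin (n + 1) → ℝ} (hz : StrictAnti z)
    (hr : ∀ j k, r j k ∈ Set.Ioo (z k.succ) (z k.castSucc)) :
    ∃ y : Fin n → ℝ, (∀ k, y k ∈ Set.Ioo (z k.succ) (z k.castSucc)) ∧
      (List.ofFn y : Multiset ℝ) = (∑ j, C (w j) * (C (c j) * ∏ i, (X - C (r j i)))).roots := by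
  refine roots_eq_ofFn_of_neg_one_pow_mul_eval_pos
    (natDegree_sum_le_of_forall_le _ _ fun j _ => ?_) hz fun k => ?_
  · exact (natDegree_C_mul_le _ _).trans
      ((natDegree_C_mul_le _ _).trans (natDegree_fin_prod_X_sub_C _).le)
  have hterm : ∀ j, 0 < (-1) ^ (k : ℕ) * ∏ i, (z k - r j i) := fun j =>
    neg_one_pow_mul_prod_sub_pos (Nat.lt_succ_iff.mp k.isLt)
      (fun i hi => (hz.antitone (Fin.le_def.mpr (by simp; omega))).trans_lt (hr j i).1)
      (fun i hi => (hr j i).2.trans_le (hz.antitone (Fin.le_def.mpr hi)))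
  have hsplit : ∀ j, (-1) ^ (k : ℕ) * (w j * (c j * ∏ i, (z k - r j i))) =
      w j * c j * ((-1) ^ (k : ℕ) * ∏ i, (z k - r j i)) := fun j => by ring
  simp only [eval_finsetSum, eval_mul, eval_C, eval_prod, eval_sub, eval_X, mul_sum, hsplit]
  obtain ⟨j₀, hj₀⟩ := hpos
  exact sum_pos' (fun j _ => mul_nonneg (mul_nonneg (hw j) (hc j).le) (hterm j).le)
    ⟨j₀, mem_univ _, mul_pos (mul_pos hj₀ (hc j₀)) (hterm j₀)⟩

lemma exists_ofFn_eq_roots_sum_C_mul_shift {ι : Type*} [Fintype ι] {n : ℕ} {w c : ι → ℝ}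
    {ρ : ι → Fin n → ℝ} {β : Fin n → ℝ} {M ε : ℝ} (hw : ∀ j, 0 ≤ w j) (hpos : ∃ j, 0 < w j)
    (hc : ∀ j, 0 < c j) (hβ : ∀ j i, β i ≤ ρ j i)
    (hβ' : ∀ j (i : Fin n), 0 < (i : ℕ) →
      ρ j i ≤ β ⟨(i : ℕ) - 1, lt_of_le_of_lt (Nat.sub_le _ _) i.isLt⟩)
    (hM : ∀ j i, ρ j i ≤ M) (hε : 0 < ε) :
    ∃ y : Fin n → ℝ, (∀ k, β k - (2 * (k : ℕ) + 1) * ε < y k ∧ y k < M + ε) ∧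
      (List.ofFn y : Multiset ℝ) =
        (∑ j, C (w j) * (C (c j) * ∏ i, (X - C (ρ j i - 2 * (i : ℕ) * ε)))).roots := by
  set z : Fin (n + 1) → ℝ := fun k => (Fin.cons M β : Fin (n + 1) → ℝ) k - (2 * (k : ℕ) - 1) * ε
  have hlo : ∀ j k, z k.succ < ρ j k - 2 * (k : ℕ) * ε := by
    intro j k
    simp only [z, Fin.cons_succ, Fin.val_succ]
    push_cast
    linarith [hβ j k]
  have hhi : ∀ j k, ρ j k - 2 * (k : ℕ) * ε < z k.castSucc := by
    rintro j ⟨_ | k, hk⟩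
    · simp only [z, Fin.castSucc_mk, Fin.mk_zero, Fin.cons_zero, Fin.val_zero]
      push_cast
      linarith [hM j ⟨0, hk⟩]
    · have : ρ j ⟨k + 1, hk⟩ ≤ β ⟨k, Nat.lt_of_succ_lt hk⟩ := hβ' j ⟨k + 1, hk⟩ k.succ_pos
      simp only [z, Fin.castSucc_mk, ← Fin.succ_mk _ _ (Nat.lt_of_succ_lt hk), Fin.cons_succ,
        Fin.val_succ]
      push_cast
      linarith
  obtain ⟨j₀, hj₀⟩ := hpos
  have hz : StrictAnti z := Fin.strictAnti_iff_succ_lt.mpr fun k => (hlo j₀ k).trans (hhi j₀ k)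
  obtain ⟨y, hy, hyq⟩ := roots_sum_C_mul_eq_ofFn_of_strict_interlacing hw ⟨j₀, hj₀⟩ hc hz
    fun j k => ⟨hlo j k, hhi j k⟩
  refine ⟨y, fun k => ⟨?_, ?_⟩, hyq⟩
  · have := (hy k).1
    simp only [z, Fin.cons_succ, Fin.val_succ] at this
    push_cast at this
    linarith
  · simpa [z] using (hy k).2.trans_le (hz.antitone (Fin.zero_le _))

end StrictInterlacing

theorem card_roots_sum_C_mul_of_interlacing {ι : Type*} [Fintype ι] {f : ι → ℝ[X]} {n : ℕ}
    (hdeg : ∀ j, (f j).natDegree = n) (hlead : ∀ j, 0 < (f j).leadingCoeff)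
    (hroots : ∀ j, (f j).roots.card = n) {β : Fin n → ℝ}
    (hβ : ∀ j i, β i ≤ (f j).sortedRoots n i)
    (hβ' : ∀ j (i : Fin n), 0 < (i : ℕ) →
      (f j).sortedRoots n i ≤ β ⟨(i : ℕ) - 1, lt_of_le_of_lt (Nat.sub_le _ _) i.isLt⟩)
    {w : ι → ℝ} (hw : ∀ j, 0 ≤ w j) (hpos : ∃ j, 0 < w j) :
    (∑ j, C (w j) * f j).roots.card = n := by
  obtain ⟨M, hM⟩ := Finite.exists_le fun x : ι × Fin n => (f x.1).sortedRoots n x.2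
  obtain ⟨b, hb⟩ := Finite.exists_ge β
  have hL : 0 < ∑ j, w j * (f j).leadingCoeff := by
    obtain ⟨j₀, hj₀⟩ := hpos
    exact sum_pos' (fun j _ => mul_nonneg (hw j) (hlead j).le)
      ⟨j₀, mem_univ _, mul_pos hj₀ (hlead j₀)⟩
  set q : ℝ → ℝ[X] := fun ε =>
    ∑ j, C (w j) * (C (f j).leadingCoeff * ∏ i, (X - C ((f j).sortedRoots n i - 2 * i * ε)))
  have hqdeg : ∀ ε, (q ε).natDegree = n ∧ (q ε).leadingCoeff = ∑ j, w j * (f j).leadingCoeff :=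
    fun ε => natDegree_leadingCoeff_sum_C_mul
      (fun j => natDegree_leadingCoeff_C_mul_fin_prod_X_sub_C (hlead j).ne' _) hL.ne'
  have hq : ∀ ε ∈ Set.Ioo (0 : ℝ) 1, (q ε).natDegree = n ∧ (q ε).roots.card = n ∧
      ∀ x ∈ (q ε).roots, x ∈ Set.Icc (b - 2 * n - 1) (M + 1) := by
    rintro ε ⟨hε₀, hε₁⟩
    obtain ⟨y, hy, hyq⟩ := exists_ofFn_eq_roots_sum_C_mul_shift hw hpos hlead hβ hβ'
      (fun j i => hM (j, i)) hε₀
    replace hyq : (List.ofFn y : Multiset ℝ) = (q ε).roots := hyq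
    refine ⟨(hqdeg ε).1, by simp [← hyq], fun x hx => ?_⟩
    obtain ⟨k, rfl⟩ := List.mem_ofFn.mp (Multiset.mem_coe.mp (hyq ▸ hx))
    have hk : (k : ℝ) + 1 ≤ n := by exact_mod_cast k.isLt
    obtain ⟨h₁, h₂⟩ := hy k
    constructor <;> nlinarith [hb k]
  have hq₀ : q 0 = ∑ j, C (w j) * f j := by
    simp only [q, mul_zero, sub_zero]
    exact sum_congr rfl fun j _ => by
      rw [C_leadingCoeff_mul_prod_X_sub_C_sortedRoots (hdeg j) (hroots j)]
  have hcont : ∀ x, Continuous fun ε => (q ε).eval x := fun x => by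
    simp only [q, eval_finsetSum, eval_mul, eval_C, eval_prod, eval_sub, eval_X]
    fun_prop
  exact card_roots_eq_of_tendsto_eval (eventually_of_mem (Ioo_mem_nhdsGT zero_lt_one) hq) hL.ne'
    (tendsto_const_nhds.congr fun ε => (hqdeg ε).2.symm)
    fun x => hq₀ ▸ ((hcont x).tendsto 0).mono_left nhdsWithin_le_nhds

end Polynomial

section Counting

variable {n : ℕ}

lemma eventually_card_lt_mem_Icc {α : Type*} {l : Filter α} {r : α → Fin n → ℝ} {v : Fin n → ℝ}
    (h : Tendsto r l (𝓝 v)) (c : ℝ) :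
    ∀ᶠ k in l, #{i | c < r k i} ∈ Set.Icc #{i | c < v i} #{i | c ≤ v i} := by
  have : ∀ᶠ k in l, ∀ i, (c < v i → c < r k i) ∧ (c < r k i → c ≤ v i) := by
    refine eventually_all.mpr fun i => ?_
    have hi := tendsto_pi_nhds.mp h i
    rcases lt_trichotomy c (v i) with hc | hc | hc
    · exact (hi.eventually_const_lt hc).mono fun k hk => ⟨fun _ => hk, fun _ => hc.le⟩
    · exact Eventually.of_forall fun k => ⟨fun h' => absurd hc h'.ne, fun _ => hc.le⟩
    · exact (hi.eventually_lt_const hc).mono fun k hk =>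
        ⟨fun h' => absurd h' hc.not_gt, fun h' => absurd h' hk.not_gt⟩
  filter_upwards [this] with k hk
  exact ⟨card_le_card fun i => by simpa using (hk i).1, card_le_card fun i => by simpa using (hk i).2⟩

lemma card_lt_mem_Icc_of_continuousOn {X : Type*} [TopologicalSpace X] {S : Set X} {T t : X}
    {r : X → Fin n → ℝ} {c : ℝ} (hS : IsPreconnected S) (hT : T ∈ closure S)
    (hr : ContinuousOn r (insert T S)) (hc : ∀ s ∈ S, ∀ i, r s i ≠ c) (ht : t ∈ S) :
    #{i | c < r t i} ∈ Set.Icc #{i | c < r T i} #{i | c ≤ r T i} := by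
  have hconst : ∀ s ∈ S, #{i | c < r s i} = #{i | c < r t i} := by
    refine fun s hs => hS.constant (f := fun s => #{i | c < r s i}) (fun s' hs' => ?_) hs ht
    have heq : #{i | c ≤ r s' i} = #{i | c < r s' i} := by
      congr 1
      exact filter_congr fun i _ => by rw [le_iff_lt_or_eq, or_iff_left (hc s' hs' i).symm]
    rw [ContinuousWithinAt, nhds_discrete, tendsto_pure]
    exact (eventually_card_lt_mem_Icc ((hr s' (Set.mem_insert_of_mem _ hs')).mono
      (Set.subset_insert _ _)) c).mono fun k hk => le_antisymm (hk.2.trans heq.le) hk.1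
  have := mem_closure_iff_nhdsWithin_neBot.mp hT
  obtain ⟨s, hs, hsS⟩ := ((eventually_card_lt_mem_Icc ((hr T (Set.mem_insert _ _)).mono_left
    (nhdsWithin_mono _ (Set.subset_insert _ _))) c).and self_mem_nhdsWithin).exists
  rwa [hconst s hsS] at hs

lemma card_lt_le_card_lt_add_card_eq {r : ℝ → Fin n → ℝ} {c u v T : ℝ}
    (hr : ContinuousOn r (Set.Icc u v)) (hT : T ∈ Set.Icc u v)
    (hc : ∀ t ∈ Set.Icc u v, t ≠ T → ∀ i, r t i ≠ c) :
    #{i | c < r u i} ≤ #{i | c < r v i} + #{i | r T i = c} := by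
  have hleft : #{i | c < r u i} ≤ #{i | c ≤ r T i} := by
    rcases eq_or_lt_of_le hT.1 with rfl | huT
    · exact card_le_card fun i => by simpa using le_of_lt
    refine (card_lt_mem_Icc_of_continuousOn isPreconnected_Ico
      (by simp [closure_Ico huT.ne, hT.1]) (hr.mono ?_)
      (fun s hs => hc s ⟨hs.1, hs.2.le.trans hT.2⟩ hs.2.ne) ⟨le_rfl, huT⟩).2
    exact Set.insert_subset hT (Set.Ico_subset_Icc_self.trans (Set.Icc_subset_Icc_right hT.2))
  have hright : #{i | c < r T i} ≤ #{i | c < r v i} := by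
    rcases eq_or_lt_of_le hT.2 with rfl | hTv
    · exact le_rfl
    refine (card_lt_mem_Icc_of_continuousOn isPreconnected_Ioc
      (by simp [closure_Ioc hTv.ne, hT.2]) (hr.mono ?_)
      (fun s hs => hc s ⟨hT.1.trans hs.1.le, hs.2⟩ hs.1.ne') ⟨hTv, le_rfl⟩).1
    exact Set.insert_subset hT (Set.Ioc_subset_Icc_self.trans (Set.Icc_subset_Icc_left hT.1))
  have hsplit : #{i | c ≤ r T i} ≤ #{i | c < r T i} + #{i | r T i = c} :=
    (card_le_card fun i => by simp [le_iff_lt_or_eq, eq_comm]).trans (card_union_le _ _)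
  omega

end Counting

namespace Polynomial

lemma eval_wronskian_eq_zero_of_one_lt_rootMultiplicity {R : Type*} [CommRing R] {F G : R[X]}
    {t c : R} (h : 1 < (C (1 - t) * F + C t * G).rootMultiplicity c) :
    (wronskian F G).eval c = 0 := by
  have h₀ := isRoot_iterate_derivative_of_lt_rootMultiplicity (n := 0) (zero_lt_one.trans h)
  have h₁ := isRoot_iterate_derivative_of_lt_rootMultiplicity (n := 1) h
  simp only [Function.iterate_zero, Function.iterate_one, id, IsRoot, derivative_add,
    derivative_C_mul, eval_add, eval_mul, eval_C] at h₀ h₁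
  rw [wronskian, eval_sub, eval_mul, eval_mul]
  linear_combination ((derivative G).eval c - (derivative F).eval c) * h₀ +
    (F.eval c - G.eval c) * h₁

lemma roots_eq_of_wronskian_eq_zero {K : Type*} [Field K] [CharZero K] {F G : K[X]}
    (hF : F ≠ 0) (hG : G ≠ 0) (hW : wronskian F G = 0) : F.roots = G.roots := by
  classical
  obtain ⟨D, F₁, G₁, hD, rfl, rfl, hcop⟩ :
      ∃ D F₁ G₁ : K[X], D ≠ 0 ∧ F = D * F₁ ∧ G = D * G₁ ∧ IsCoprime F₁ G₁ := by
    have hD : GCDMonoid.gcd F G ≠ 0 := gcd_ne_zero_of_right hG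
    obtain ⟨F₁, hF₁⟩ := GCDMonoid.gcd_dvd_left F G
    obtain ⟨G₁, hG₁⟩ := GCDMonoid.gcd_dvd_right F G
    refine ⟨_, F₁, G₁, hD, hF₁, hG₁, ?_⟩
    have h₁ : F / GCDMonoid.gcd F G = F₁ := by rw [← mul_div_cancel_left₀ F₁ hD, ← hF₁]
    have h₂ : G / GCDMonoid.gcd F G = G₁ := by rw [← mul_div_cancel_left₀ G₁ hD, ← hG₁]
    exact h₁ ▸ h₂ ▸ isCoprime_div_gcd_div_gcd hG
  have hW₁ : wronskian F₁ G₁ = 0 := by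
    have : wronskian (D * F₁) (D * G₁) = D ^ 2 * wronskian F₁ G₁ := by
      simp only [wronskian, derivative_mul]
      ring
    rw [this] at hW
    exact (mul_eq_zero.mp hW).resolve_left (pow_ne_zero _ hD)
  obtain ⟨hF₁', hG₁'⟩ := hcop.wronskian_eq_zero_iff.mp hW₁
  rw [eq_C_of_derivative_eq_zero hF₁'] at hF ⊢
  rw [eq_C_of_derivative_eq_zero hG₁'] at hG ⊢
  rw [mul_comm, roots_C_mul _ fun h => hF (by rw [h, C_0, mul_zero]), mul_comm,
    roots_C_mul _ fun h => hG (by rw [h, C_0, mul_zero])]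

section Segment

variable {F G : ℝ[X]} {n : ℕ}

lemma natDegree_leadingCoeff_C_one_sub_mul_add_C_mul (hF : F.natDegree = n)
    (hG : G.natDegree = n) (hFl : 0 < F.leadingCoeff) (hGl : 0 < G.leadingCoeff) {t : ℝ}
    (ht : t ∈ Set.Icc (0 : ℝ) 1) :
    (C (1 - t) * F + C t * G).natDegree = n ∧ 0 < (C (1 - t) * F + C t * G).leadingCoeff ∧
      (C (1 - t) * F + C t * G).leadingCoeff = (1 - t) * F.leadingCoeff + t * G.leadingCoeff := by
  have hpos : 0 < (1 - t) * F.leadingCoeff + t * G.leadingCoeff := by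
    simpa using convex_Ioi (0 : ℝ) hFl hGl (sub_nonneg.mpr ht.2) ht.1 (sub_add_cancel 1 t)
  have := natDegree_leadingCoeff_sum_C_mul (f := ![F, G]) (w := ![1 - t, t])
    (c := ![F.leadingCoeff, G.leadingCoeff]) (n := n) (by simp [Fin.forall_fin_two, hF, hG])
    (by simpa [Fin.sum_univ_two] using hpos.ne')
  simp only [Fin.sum_univ_two, Matrix.cons_val_zero, Matrix.cons_val_one] at this
  exact ⟨this.1, this.2 ▸ hpos, this.2⟩

lemma mem_Icc_of_mem_roots_C_one_sub_mul_add_C_mul (hF : F.natDegree = n)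
    (hG : G.natDegree = n) (hFl : 0 < F.leadingCoeff) (hGl : 0 < G.leadingCoeff)
    (hFr : F.roots.card = n) (hGr : G.roots.card = n) {a b : ℝ}
    (hab : ∀ x ∈ F.roots + G.roots, x ∈ Set.Icc a b) {t : ℝ} (ht : t ∈ Set.Icc (0 : ℝ) 1)
    {x : ℝ} (hx : x ∈ (C (1 - t) * F + C t * G).roots) : x ∈ Set.Icc a b := by
  have hx₀ : (1 - t) * F.eval x + t * G.eval x = 0 := by
    simpa using (mem_roots'.mp hx).2
  have hFab y (hy : y ∈ F.roots) := hab y (Multiset.mem_add.mpr (Or.inl hy))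
  have hGab y (hy : y ∈ G.roots) := hab y (Multiset.mem_add.mpr (Or.inr hy))
  constructor
  · by_contra! hxa
    have hFx := neg_one_pow_mul_eval_pos_of_forall_lt_roots hF hFr hFl fun y hy =>
      hxa.trans_le (hFab y hy).1
    have hGx := neg_one_pow_mul_eval_pos_of_forall_lt_roots hG hGr hGl fun y hy =>
      hxa.trans_le (hGab y hy).1
    have := convex_Ioi (0 : ℝ) hFx hGx (sub_nonneg.mpr ht.2) ht.1 (sub_add_cancel 1 t)
    simp only [smul_eq_mul, Set.mem_Ioi] at this
    linarith [congrArg ((-1) ^ n * ·) hx₀]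
  · by_contra! hxb
    have hFx := eval_pos_of_forall_roots_lt hF hFr hFl fun y hy => (hFab y hy).2.trans_lt hxb
    have hGx := eval_pos_of_forall_roots_lt hG hGr hGl fun y hy => (hGab y hy).2.trans_lt hxb
    have := convex_Ioi (0 : ℝ) hFx hGx (sub_nonneg.mpr ht.2) ht.1 (sub_add_cancel 1 t)
    simp only [smul_eq_mul, Set.mem_Ioi] at this
    linarith

lemma continuousOn_sortedRoots_C_one_sub_mul_add_C_mul (hF : F.natDegree = n)
    (hG : G.natDegree = n) (hFl : 0 < F.leadingCoeff) (hGl : 0 < G.leadingCoeff)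
    (hFr : F.roots.card = n) (hGr : G.roots.card = n)
    (H : ∀ t ∈ Set.Icc (0 : ℝ) 1, (C (1 - t) * F + C t * G).roots.card = n) :
    ContinuousOn (fun t => (C (1 - t) * F + C t * G).sortedRoots n) (Set.Icc 0 1) := by
  obtain ⟨a, ha⟩ := (F.roots + G.roots).toFinset.bddBelow
  obtain ⟨b, hb⟩ := (F.roots + G.roots).toFinset.bddAbove
  have hab : ∀ x ∈ F.roots + G.roots, x ∈ Set.Icc a b := fun x hx =>
    ⟨ha (Multiset.mem_toFinset.mpr hx), hb (Multiset.mem_toFinset.mpr hx)⟩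
  have hdeg t (ht : t ∈ Set.Icc (0 : ℝ) 1) :=
    natDegree_leadingCoeff_C_one_sub_mul_add_C_mul hF hG hFl hGl ht
  refine continuousOn_sortedRoots (fun t ht => ⟨(hdeg t ht).1, H t ht,
      fun x => mem_Icc_of_mem_roots_C_one_sub_mul_add_C_mul hF hG hFl hGl hFr hGr hab ht⟩)
    ((Continuous.continuousOn (by fun_prop)).congr fun t ht => (hdeg t ht).2.2)
    (fun t ht => (hdeg t ht).2.1.ne') fun x => ?_
  simp only [eval_add, eval_mul, eval_C]
  exact Continuous.continuousOn (by fun_prop)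

lemma exists_forall_ne_eval_C_one_sub_mul_add_C_mul_ne_zero {c : ℝ} (hF : F.eval c ≠ 0) :
    ∃ T ∈ Set.Icc (0 : ℝ) 1, ∀ t ∈ Set.Icc (0 : ℝ) 1, t ≠ T →
      (C (1 - t) * F + C t * G).eval c ≠ 0 := by
  simp only [eval_add, eval_mul, eval_C]
  by_cases h : ∃ T ∈ Set.Icc (0 : ℝ) 1, (1 - T) * F.eval c + T * G.eval c = 0
  · obtain ⟨T, hT, hT₀⟩ := h
    refine ⟨T, hT, fun t _ htT ht₀ => ?_⟩
    have : (t - T) * (G.eval c - F.eval c) = 0 := by linear_combination ht₀ - hT₀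
    rcases mul_eq_zero.mp this with h | h
    · exact htT (sub_eq_zero.mp h)
    · exact hF (by linear_combination hT₀ - T * h)
  · simp only [not_exists, not_and] at h
    exact ⟨0, ⟨le_rfl, zero_le_one⟩, fun t ht _ => h t ht⟩

lemma eval_wronskian_eq_zero_of_card_lt_add_two_le (hF : F.natDegree = n)
    (hG : G.natDegree = n) (hFl : 0 < F.leadingCoeff) (hGl : 0 < G.leadingCoeff)
    (hFr : F.roots.card = n) (hGr : G.roots.card = n)
    (H : ∀ t ∈ Set.Icc (0 : ℝ) 1, (C (1 - t) * F + C t * G).roots.card = n) {c : ℝ}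
    (hFc : F.eval c ≠ 0) (hc : #{l | c < G.sortedRoots n l} + 2 ≤ #{l | c < F.sortedRoots n l}) :
    (wronskian F G).eval c = 0 := by
  set r : ℝ → Fin n → ℝ := fun t => (C (1 - t) * F + C t * G).sortedRoots n
  obtain ⟨T, hT, hTc⟩ := exists_forall_ne_eval_C_one_sub_mul_add_C_mul_ne_zero (G := G) hFc
  have hcount := card_lt_le_card_lt_add_card_eq (r := r) (c := c)
    (continuousOn_sortedRoots_C_one_sub_mul_add_C_mul hF hG hFl hGl hFr hGr H) hT
    fun t ht htT l hl => hTc t ht htT (mem_roots'.mp (hl ▸ sortedRoots_mem_roots (H t ht) l)).2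
  have hr₀ : r 0 = F.sortedRoots n := by simp [r]
  have hr₁ : r 1 = G.sortedRoots n := by simp [r]
  refine eval_wronskian_eq_zero_of_one_lt_rootMultiplicity (t := T) ?_
  rw [← count_roots, count_roots_eq_card_sortedRoots (H T hT)]
  change 1 < #{l | r T l = c}
  rw [hr₀, hr₁] at hcount
  omega

theorem sortedRoots_le_sortedRoots_pred_of_forall_card_roots (hF : F.natDegree = n)
    (hG : G.natDegree = n) (hFl : 0 < F.leadingCoeff) (hGl : 0 < G.leadingCoeff)
    (hFr : F.roots.card = n) (hGr : G.roots.card = n)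
    (H : ∀ t ∈ Set.Icc (0 : ℝ) 1, (C (1 - t) * F + C t * G).roots.card = n)
    (i : Fin n) (hi : 0 < (i : ℕ)) :
    F.sortedRoots n i ≤ G.sortedRoots n ⟨i - 1, lt_of_le_of_lt (Nat.sub_le _ _) i.isLt⟩ := by
  have hF₀ : F ≠ 0 := leadingCoeff_ne_zero.mp hFl.ne'
  have hG₀ : G ≠ 0 := leadingCoeff_ne_zero.mp hGl.ne'
  by_contra! hlt
  by_cases hW : wronskian F G = 0
  · have hFG : G.sortedRoots n = F.sortedRoots n := eq_sortedRoots (antitone_sortedRoots hGr)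
      ((coe_ofFn_sortedRoots hGr).trans (roots_eq_of_wronskian_eq_zero hF₀ hG₀ hW).symm)
    exact (hlt.trans_le (hFG ▸ antitone_sortedRoots hFr (Fin.le_def.mpr (Nat.sub_le _ _)))).false
  obtain ⟨c, ⟨hc₁, hc₂⟩, hc⟩ := (Set.Ioo_infinite hlt).exists_notMem_finset
    (F * G * wronskian F G).roots.toFinset
  have hc₀ : (F * G * wronskian F G).eval c ≠ 0 := fun h =>
    hc (Multiset.mem_toFinset.mpr ((mem_roots (mul_ne_zero (mul_ne_zero hF₀ hG₀) hW)).mpr h))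
  simp only [eval_mul, mul_ne_zero_iff] at hc₀
  refine hc₀.2 (eval_wronskian_eq_zero_of_card_lt_add_two_le hF hG hFl hGl hFr hGr H hc₀.1.1 ?_)
  have hG₁ : #{l | c < G.sortedRoots n l} ≤ #{l : Fin n | (l : ℕ) < i - 1} :=
    card_le_card fun l hl => by
      simp only [mem_filter, mem_univ, true_and] at hl ⊢
      by_contra! hl'
      exact (hl.trans_le (antitone_sortedRoots hGr (Fin.le_def.mpr hl'))).trans hc₁ |>.false
  have hF₁ : #{l : Fin n | (l : ℕ) < i + 1} ≤ #{l | c < F.sortedRoots n l} :=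
    card_le_card fun l hl => by
      simp only [mem_filter, mem_univ, true_and] at hl ⊢
      exact hc₂.trans_le (antitone_sortedRoots hFr (Fin.le_def.mpr (by omega)))
  simp only [Fin.card_filter_val_lt] at hG₁ hF₁
  omega

end Segment

end Polynomial

/-- Real-rooted polynomials `f₁,…,f_m` of the same degree `n` with positive leading
coefficients have a common interlacing (there are `β_n ≤ … ≤ β₁` such that the `i`-th largest
root of each `f j` lies in `[βᵢ, βᵢ₋₁]`, with `β₀ = +∞`) if and only if every convex
combination of them is real rooted.  `ρ j` lists the roots of `f j` in decreasing order. -/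
theorem common_interlacing_iff_convex_real_rooted (n m : ℕ) (hm : 0 < m)
    (f : Fin m → Polynomial ℝ)
    (hdeg : ∀ j, (f j).natDegree = n)
    (hlead : ∀ j, 0 < (f j).leadingCoeff)
    (hroots : ∀ j, (f j).roots.card = n)
    (ρ : Fin m → Fin n → ℝ)
    (hρa : ∀ j, Antitone (ρ j))
    (hρ : ∀ j, (↑(List.ofFn (ρ j)) : Multiset ℝ) = (f j).roots) :
    (∃ β : Fin n → ℝ, Antitone β ∧
        (∀ j i, β i ≤ ρ j i) ∧
        (∀ j, ∀ i : Fin n, 0 < (i : ℕ) →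
          ρ j i ≤ β ⟨(i : ℕ) - 1, lt_of_le_of_lt (Nat.sub_le _ _) i.isLt⟩)) ↔
      (∀ lam : Fin m → ℝ, (∀ j, 0 ≤ lam j) → (∑ j, lam j) = 1 →
        (∑ j, Polynomial.C (lam j) * f j).roots.card = n) := by
  obtain rfl : ρ = fun j => (f j).sortedRoots n := funext fun j => eq_sortedRoots (hρa j) (hρ j)
  constructor
  · rintro ⟨β, -, hβ, hβ'⟩ lam hlam hsum
    exact card_roots_sum_C_mul_of_interlacing hdeg hlead hroots hβ hβ' hlam
      (by simpa using exists_lt_of_sum_lt (s := univ) (f := 0) (g := lam) (by simp [hsum]))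
  · intro H
    have hpair j k : ∀ i : Fin n, 0 < (i : ℕ) → (f j).sortedRoots n i ≤
        (f k).sortedRoots n ⟨i - 1, lt_of_le_of_lt (Nat.sub_le _ _) i.isLt⟩ :=
      sortedRoots_le_sortedRoots_pred_of_forall_card_roots (hdeg j) (hdeg k) (hlead j) (hlead k)
        (hroots j) (hroots k) fun t ht => by
          have := H (Pi.single j (1 - t) + Pi.single k t)
            (fun s => by
              simp only [Pi.add_apply, Pi.single_apply]
              split_ifs <;> linarith [ht.1, ht.2])
            (by simp [sum_add_distrib])
          simpa only [Pi.add_apply, C_add, add_mul, sum_add_distrib, Pi.single_apply, apply_ite C,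
            C_0, ite_mul, zero_mul, sum_ite_eq', mem_univ, if_true] using this
    have : Nonempty (Fin m) := ⟨⟨0, hm⟩⟩
    refine ⟨fun i => univ.inf' univ_nonempty fun j => (f j).sortedRoots n i, fun i i' hii' => ?_,
      fun j i => inf'_le _ (mem_univ j), fun j i hi => le_inf' _ _ fun k _ => hpair j k i hi⟩
    exact le_inf' _ _ fun k _ =>
      (inf'_le _ (mem_univ k)).trans (antitone_sortedRoots (hroots k) hii')
end

section
/- Let f₁,…,f_m ∈ ℝ[x] be real-rooted polynomials of the same degree n with positive leading coefficients that have a common interlacing, and let λ₁,…,λ_m ≥ 0 with Σλ_i = 1. Then for each 1 ≤ i ≤ n, the i-th largest root of λ₁f₁+⋯+λ_m f_m lies in the closed interval [min_j r_i(f_j), max_j r_i(f_j)], where r_i(f_j) denotes the i-th largest root of f_j. -/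
/-!
Write `N_s(x)` for the number of elements of `s` greater than `x`. For sorted roots, `x < τ_i`
iff `i < N_τ(x)`, so it suffices that at every `x` the count `N_G(x)` for `G = ∑ λ_j f_j`
equals `N_{f_j}(x)` for some `j` with `λ_j > 0`.

A common interlacing `β` means `N_β ≤ N_{f_j} ≤ N_β + 1`. At `β_k` each `f_j` vanishes or has
sign `(-1)^(k+1)`, hence so does `G`. If `G(β_k) ≠ 0` for all `k`, this sign fixes the parity of
`N_G(β_k)`, and monotonicity with `deg G = n` forces `N_G(β_k) = k + 1`: `β` also interlaces `G`.
If `G(β_k) = 0`, then `β_k` is a common root of all `f_j`; dividing it out and deleting `β_k`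
lowers the degree. Finally, near `x` every count lies in `{N_β, N_β + 1}`; if all `N_{f_j}`
avoided `N_G`, they would share one value `c` and `G` would have sign `(-1)^c`, against parity.
-/

open Polynomial Filter Topology Finset

namespace RootInterlacing

noncomputable def numAbove (s : Multiset ℝ) (x : ℝ) : ℕ := s.countP (x < ·)

/-- For `B` and `s` listed in decreasing order as `b₀ ≥ b₁ ≥ ⋯` and `s₀ ≥ s₁ ≥ ⋯`, this says
`b_k ≤ s_k ≤ b_{k-1}` for every `k`. -/
def Interlaces (B s : Multiset ℝ) : Prop :=
  ∀ x, numAbove B x ≤ numAbove s x ∧ numAbove s x ≤ numAbove B x + 1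

lemma numAbove_cons (a : ℝ) (s : Multiset ℝ) (x : ℝ) :
    numAbove (a ::ₘ s) x = numAbove s x + if x < a then 1 else 0 :=
  Multiset.countP_cons _ _ _

lemma numAbove_le_card (s : Multiset ℝ) (x : ℝ) : numAbove s x ≤ Multiset.card s :=
  Multiset.countP_le_card _ _

lemma numAbove_antitone (s : Multiset ℝ) : Antitone (numAbove s) := fun x y hxy => by
  simp only [numAbove, Multiset.countP_eq_card_filter]
  exact Multiset.card_le_card
    (Multiset.monotone_filter_right s fun t hyt => lt_of_le_of_lt hxy hyt)

lemma numAbove_ofFn {n : ℕ} (β : Fin n → ℝ) (x : ℝ) :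
    numAbove ↑(List.ofFn β) x = #{l | x < β l} := by
  rw [numAbove, ← Fin.univ_val_map, Multiset.countP_map]
  rfl

lemma lt_numAbove_ofFn_iff {n : ℕ} {β : Fin n → ℝ} (hβ : Antitone β) (l : Fin n) (x : ℝ) :
    (l : ℕ) < numAbove ↑(List.ofFn β) x ↔ x < β l := by
  rw [numAbove_ofFn]
  constructor
  · intro hl
    by_contra hle
    have hsub : ({m | x < β m} : Finset (Fin n)) ⊆ Iio l := fun m hm => by
      simp only [mem_filter, mem_univ, true_and] at hm
      exact mem_Iio.2 (lt_of_not_ge fun hlm => hle (hm.trans_le (hβ hlm)))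
    exact (card_le_card hsub).not_gt (by rwa [Fin.card_Iio])
  · intro hx
    have hsub : Iic l ⊆ ({m | x < β m} : Finset (Fin n)) := fun m hm => by
      simp only [mem_filter, mem_univ, true_and]
      exact hx.trans_le (hβ (mem_Iic.1 hm))
    exact Nat.lt_of_succ_le ((Fin.card_Iic l).symm.trans_le (card_le_card hsub))

lemma ofFn_eq_cons_ofFn_succAbove {n : ℕ} (β : Fin (n + 1) → ℝ) (k : Fin (n + 1)) :
    (↑(List.ofFn β) : Multiset ℝ) = β k ::ₘ ↑(List.ofFn (β ∘ k.succAbove)) := by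
  rw [← Fin.univ_val_map, ← Fin.univ_val_map, Fin.univ_succAbove n k]
  simp [Function.comp_def]

lemma interlaces_cons_iff (a : ℝ) (B s : Multiset ℝ) :
    Interlaces (a ::ₘ B) (a ::ₘ s) ↔ Interlaces B s := by
  simp only [Interlaces, numAbove_cons]
  refine forall_congr' fun x => ?_
  split_ifs <;> omega

lemma eventually_numAbove_eq {s : Multiset ℝ} {x : ℝ} (hx : x ∉ s) :
    ∀ᶠ y in 𝓝 x, numAbove s y = numAbove s x := by
  have key : ∀ t ∈ s.toFinset, ∀ᶠ y in 𝓝 x, (y < t ↔ x < t) := fun t ht => by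
    rcases (ne_of_mem_of_not_mem (Multiset.mem_toFinset.1 ht) hx).lt_or_gt with h | h
    · filter_upwards [eventually_gt_nhds h] with y hy
      exact iff_of_false hy.not_gt h.not_gt
    · filter_upwards [eventually_lt_nhds h] with y hy
      exact iff_of_true hy h
  filter_upwards [(eventually_all_finset _).2 key] with y hy
  exact Multiset.countP_congr rfl fun t ht => propext (hy t (Multiset.mem_toFinset.2 ht))

lemma eventually_nhdsGT_numAbove_eq (s : Multiset ℝ) (x : ℝ) :
    ∀ᶠ y in 𝓝[>] x, numAbove s y = numAbove s x ∧ y ∉ s := by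
  have key : ∀ t ∈ s.toFinset, ∀ᶠ y in 𝓝[>] x, (y < t ↔ x < t) := fun t _ => by
    rcases lt_or_ge x t with h | h
    · filter_upwards [nhdsWithin_le_nhds (eventually_lt_nhds h)] with y hy
      exact iff_of_true hy h
    · filter_upwards [self_mem_nhdsWithin] with y hy
      exact iff_of_false (fun hyt => (h.trans_lt (Set.mem_Ioi.1 hy)).not_gt hyt) h.not_gt
  filter_upwards [(eventually_all_finset _).2 key, self_mem_nhdsWithin] with y hy hxy
  refine ⟨Multiset.countP_congr rfl fun t ht => propext (hy t (Multiset.mem_toFinset.2 ht)),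
    fun hys => ?_⟩
  exact (lt_irrefl y) ((hy y (Multiset.mem_toFinset.2 hys)).2 hxy)

lemma neg_one_pow_numAbove_mul_prod_pos {s : Multiset ℝ} {x : ℝ} (hx : x ∉ s) :
    0 < (-1) ^ numAbove s x * (s.map (x - ·)).prod := by
  induction s using Multiset.induction_on with
  | empty => simp [numAbove]
  | cons a s ih =>
    rw [Multiset.mem_cons, not_or] at hx
    have hfactor : 0 < (-1) ^ (if x < a then 1 else 0) * (x - a) := by
      split_ifs with h
      · linarith
      · linarith [lt_of_le_of_ne (not_lt.1 h) (Ne.symm hx.1)]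
    rw [numAbove_cons, Multiset.map_cons, Multiset.prod_cons, pow_add]
    calc (0 : ℝ) < ((-1) ^ (if x < a then 1 else 0) * (x - a)) *
          ((-1) ^ numAbove s x * (s.map (x - ·)).prod) := mul_pos hfactor (ih hx.2)
      _ = _ := by ring

lemma eval_eq_leadingCoeff_mul_prod {p : ℝ[X]} (hp : Multiset.card p.roots = p.natDegree)
    (x : ℝ) : p.eval x = p.leadingCoeff * (p.roots.map (x - ·)).prod := by
  conv_lhs => rw [← C_leadingCoeff_mul_prod_multiset_X_sub_C hp]
  simp [eval_multiset_prod, Multiset.map_map]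

section Sign

variable {p : ℝ[X]} (hp : Multiset.card p.roots = p.natDegree) (hlc : 0 < p.leadingCoeff)
include hp hlc

lemma neg_one_pow_numAbove_mul_eval_pos {x : ℝ} (hx : p.eval x ≠ 0) :
    0 < (-1) ^ numAbove p.roots x * p.eval x := by
  have hxr : x ∉ p.roots := fun h => hx (isRoot_of_mem_roots h)
  rw [eval_eq_leadingCoeff_mul_prod hp, mul_left_comm]
  exact mul_pos hlc (neg_one_pow_numAbove_mul_prod_pos hxr)

lemma neg_one_pow_numAbove_mul_eval_nonneg (x : ℝ) :
    0 ≤ (-1) ^ numAbove p.roots x * p.eval x := by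
  by_cases hx : p.eval x = 0
  · simp [hx]
  · exact (neg_one_pow_numAbove_mul_eval_pos hp hlc hx).le

end Sign

lemma mod_two_eq_of_neg_one_pow_mul_pos {a b : ℕ} {v : ℝ} (ha : 0 < (-1) ^ a * v)
    (hb : 0 < (-1) ^ b * v) : a % 2 = b % 2 := by
  rw [neg_one_pow_eq_pow_mod_two] at ha hb
  rcases Nat.mod_two_eq_zero_or_one a with h | h <;>
    rcases Nat.mod_two_eq_zero_or_one b with h' | h' <;>
    simp only [h, h', pow_zero, pow_one, one_mul, neg_one_mul, Left.neg_pos_iff] at ha hb ⊢ <;>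
    linarith

lemma eq_succ_of_monotone_of_mod_two {n : ℕ} {g : Fin n → ℕ} (hg : Monotone g)
    (hpar : ∀ k, g k % 2 = (k + 1) % 2) (hle : ∀ k, g k ≤ n) (k : Fin n) : g k = k + 1 := by
  have hstep : ∀ k l : Fin n, (l : ℕ) = k + 1 → g k + 1 ≤ g l := fun k l hkl => by
    have := hg (Fin.le_def.2 (by omega) : k ≤ l)
    have := hpar k
    have := hpar l
    omega
  have hlow : ∀ m (k : Fin n), (k : ℕ) = m → m + 1 ≤ g k := by
    intro m
    induction m with
    | zero => intro k hk; have := hpar k; omega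
    | succ m ih =>
      intro k hk
      have := ih ⟨m, by omega⟩ rfl
      have := hstep ⟨m, by omega⟩ k (by simp [hk])
      omega
  have hhigh : ∀ d (k : Fin n), (k : ℕ) + d + 1 = n → g k + d ≤ n := by
    intro d
    induction d with
    | zero => intro k _; simpa using hle k
    | succ d ih =>
      intro k hk
      have := ih ⟨k + 1, by omega⟩ (by simp; omega)
      have := hstep k ⟨k + 1, by omega⟩ rfl
      omega
  have := hlow k k rfl
  have := hhigh (n - 1 - k) k (by omega)
  omega

section Interlacer

variable {n : ℕ} {β : Fin n → ℝ} (hβ : Antitone β)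
include hβ

lemma numAbove_ofFn_apply_le (k : Fin n) : numAbove ↑(List.ofFn β) (β k) ≤ k := by
  by_contra h
  exact lt_irrefl _ ((lt_numAbove_ofFn_iff hβ k (β k)).1 (by omega))

lemma numAbove_eq_succ_of_interlaces {s : Multiset ℝ} (h : Interlaces ↑(List.ofFn β) s)
    (k : Fin n) (hk : β k ∉ s) : numAbove s (β k) = k + 1 := by
  obtain ⟨y, hyk, hy⟩ :=
    ((eventually_numAbove_eq hk).filter_mono nhdsWithin_le_nhds |>.and
      self_mem_nhdsWithin).exists (f := 𝓝[<] (β k))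
  have hlow : (k : ℕ) < numAbove ↑(List.ofFn β) y := (lt_numAbove_ofFn_iff hβ k y).2 hy
  have := (h y).1
  have := (h (β k)).2
  have := numAbove_ofFn_apply_le hβ k
  omega

lemma interlaces_ofFn_of_numAbove_eq {s : Multiset ℝ} (hs : Multiset.card s ≤ n + 1)
    (h : ∀ k, numAbove s (β k) = k + 1) : Interlaces ↑(List.ofFn β) s := by
  intro x
  obtain ⟨c, hc⟩ : ∃ c, numAbove ↑(List.ofFn β) x = c := ⟨_, rfl⟩
  have hcn : c ≤ n := by simpa [hc] using numAbove_le_card (↑(List.ofFn β)) x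
  rw [hc]
  constructor
  · rcases Nat.eq_zero_or_pos c with h0 | hpos
    · omega
    · have hx : x < β ⟨c - 1, by omega⟩ :=
        (lt_numAbove_ofFn_iff hβ _ x).1 (by simp only [hc]; omega)
      have := numAbove_antitone s hx.le
      have := h ⟨c - 1, by omega⟩
      simp only at this
      omega
  · rcases hcn.lt_or_eq with hlt | heq
    · have hx : β ⟨c, hlt⟩ ≤ x :=
        not_lt.1 fun hx => (lt_numAbove_ofFn_iff hβ ⟨c, hlt⟩ x).2 hx |>.ne (by simp [hc])
      have := numAbove_antitone s hx
      have := h ⟨c, hlt⟩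
      simp only at this
      omega
    · have := numAbove_le_card s x
      omega

lemma neg_one_pow_mul_eval_nonneg_of_interlaces {p : ℝ[X]}
    (hp : Multiset.card p.roots = p.natDegree) (hlc : 0 < p.leadingCoeff)
    (h : Interlaces ↑(List.ofFn β) p.roots) (k : Fin n) :
    0 ≤ (-1) ^ ((k : ℕ) + 1) * p.eval (β k) := by
  by_cases hk : p.eval (β k) = 0
  · simp [hk]
  · rw [← numAbove_eq_succ_of_interlaces hβ h k fun hm => hk (isRoot_of_mem_roots hm)]
    exact (neg_one_pow_numAbove_mul_eval_pos hp hlc hk).le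

lemma interlaces_ofFn_of_le {ρ : Fin n → ℝ} (hρ : Antitone ρ) (hlow : ∀ i, β i ≤ ρ i)
    (hhigh : ∀ i : Fin n, 0 < (i : ℕ) →
      ρ i ≤ β ⟨(i : ℕ) - 1, lt_of_le_of_lt (Nat.sub_le _ _) i.isLt⟩) :
    Interlaces ↑(List.ofFn β) ↑(List.ofFn ρ) := by
  intro x
  constructor
  · simp only [numAbove_ofFn]
    exact card_le_card fun l hl => by
      simp only [mem_filter, mem_univ, true_and] at hl ⊢
      exact hl.trans_le (hlow l)
  · obtain ⟨c, hc⟩ : ∃ c, numAbove ↑(List.ofFn ρ) x = c := ⟨_, rfl⟩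
    have hcn : c ≤ n := by simpa [hc] using numAbove_le_card (↑(List.ofFn ρ)) x
    rw [hc]
    rcases c with _ | _ | c
    · omega
    · omega
    · have hx : x < ρ ⟨c + 1, by omega⟩ := (lt_numAbove_ofFn_iff hρ _ x).1 (by simp [hc])
      have hxβ : x < β ⟨c, by omega⟩ := hx.trans_le (hhigh ⟨c + 1, by omega⟩ (by simp))
      have := (lt_numAbove_ofFn_iff hβ _ x).2 hxβ
      simp only at this
      omega

end Interlacer

lemma roots_X_sub_C_mul (b : ℝ) {q : ℝ[X]} (hq : q ≠ 0) :
    ((X - C b) * q).roots = b ::ₘ q.roots := by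
  rw [roots_mul (mul_ne_zero (X_sub_C_ne_zero b) hq), roots_X_sub_C, Multiset.singleton_add]

lemma interlaces_ofFn_roots_X_sub_C_mul_iff {n : ℕ} {β : Fin (n + 1) → ℝ} {k : Fin (n + 1)}
    {q : ℝ[X]} (hq : q ≠ 0) :
    Interlaces ↑(List.ofFn β) ((X - C (β k)) * q).roots ↔
      Interlaces ↑(List.ofFn (β ∘ k.succAbove)) q.roots := by
  rw [ofFn_eq_cons_ofFn_succAbove β k, roots_X_sub_C_mul _ hq, interlaces_cons_iff]

section WeightedSum

variable {ι : Type*} [Fintype ι] {w : ι → ℝ} {f : ι → ℝ[X]}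

lemma eval_sum_C_mul (x : ℝ) : (∑ j, C (w j) * f j).eval x = ∑ j, w j * (f j).eval x := by
  simp [eval_finsetSum]

lemma coeff_sum_C_mul_of_natDegree_eq {n : ℕ} (hdeg : ∀ j, (f j).natDegree = n) :
    (∑ j, C (w j) * f j).coeff n = ∑ j, w j * (f j).leadingCoeff := by
  simp [finsetSum_coeff, coeff_C_mul, leadingCoeff, hdeg]

variable (hw : ∀ j, 0 < w j)
include hw

lemma mul_eval_sum_C_mul_nonneg {ε x : ℝ} (h : ∀ j, 0 ≤ ε * (f j).eval x) :
    0 ≤ ε * (∑ j, C (w j) * f j).eval x := by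
  rw [eval_sum_C_mul, Finset.mul_sum]
  exact Finset.sum_nonneg fun j _ => by
    rw [mul_left_comm]
    exact mul_nonneg (hw j).le (h j)

lemma eval_eq_zero_of_eval_sum_C_mul_eq_zero {ε x : ℝ} (hε : ε ≠ 0)
    (h : ∀ j, 0 ≤ ε * (f j).eval x) (hG : (∑ j, C (w j) * f j).eval x = 0) (j : ι) :
    (f j).eval x = 0 := by
  have hsum : ∑ i, w i * (ε * (f i).eval x) = 0 := by
    simp_rw [mul_left_comm (w _) ε]
    rw [← Finset.mul_sum, ← eval_sum_C_mul, hG, mul_zero]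
  have := (Finset.sum_eq_zero_iff_of_nonneg fun i _ => mul_nonneg (hw i).le (h i)).1 hsum j
    (mem_univ j)
  simpa [(hw j).ne', hε] using this

variable [Nonempty ι] (hlc : ∀ j, 0 < (f j).leadingCoeff)
include hlc

lemma sum_weighted_leadingCoeff_pos : 0 < ∑ j, w j * (f j).leadingCoeff :=
  Finset.sum_pos (fun j _ => mul_pos (hw j) (hlc j)) univ_nonempty

variable {n : ℕ} (hdeg : ∀ j, (f j).natDegree = n)
include hdeg

lemma natDegree_sum_C_mul : (∑ j, C (w j) * f j).natDegree = n := by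
  refine le_antisymm (natDegree_sum_le_of_forall_le _ _ fun j _ =>
    (natDegree_C_mul_le _ _).trans (hdeg j).le) (le_natDegree_of_ne_zero ?_)
  rw [coeff_sum_C_mul_of_natDegree_eq hdeg]
  exact (sum_weighted_leadingCoeff_pos hw hlc).ne'

lemma leadingCoeff_sum_C_mul_pos : 0 < (∑ j, C (w j) * f j).leadingCoeff := by
  rw [leadingCoeff, natDegree_sum_C_mul hw hlc hdeg, coeff_sum_C_mul_of_natDegree_eq hdeg]
  exact sum_weighted_leadingCoeff_pos hw hlc

end WeightedSum

section CommonInterlacing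

variable {ι : Type*} [Fintype ι] [Nonempty ι] {w : ι → ℝ} (hw : ∀ j, 0 < w j)
  {n : ℕ} {β : Fin n → ℝ} (hβ : Antitone β) {f : ι → ℝ[X]}
  (hdeg : ∀ j, (f j).natDegree = n) (hlc : ∀ j, 0 < (f j).leadingCoeff)
  (hroots : ∀ j, Multiset.card (f j).roots = n)
  (hint : ∀ j, Interlaces ↑(List.ofFn β) (f j).roots)
  (hG : Multiset.card (∑ j, C (w j) * f j).roots = n)
include hw hβ hdeg hlc hroots hint hG

lemma interlaces_roots_sum_C_mul_of_eval_ne_zero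
    (hne : ∀ k, (∑ j, C (w j) * f j).eval (β k) ≠ 0) :
    Interlaces ↑(List.ofFn β) (∑ j, C (w j) * f j).roots := by
  set G := ∑ j, C (w j) * f j
  have hGlc : 0 < G.leadingCoeff := leadingCoeff_sum_C_mul_pos hw hlc hdeg
  have hGsplit : Multiset.card G.roots = G.natDegree :=
    hG.trans (natDegree_sum_C_mul hw hlc hdeg).symm
  have hsign : ∀ k : Fin n, 0 < (-1) ^ ((k : ℕ) + 1) * G.eval (β k) := fun k =>
    lt_of_le_of_ne (mul_eval_sum_C_mul_nonneg hw fun j =>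
        neg_one_pow_mul_eval_nonneg_of_interlaces hβ ((hroots j).trans (hdeg j).symm) (hlc j)
          (hint j) k)
      (by simp [hne k])
  refine interlaces_ofFn_of_numAbove_eq hβ (by omega)
    (eq_succ_of_monotone_of_mod_two (fun k l hkl => numAbove_antitone _ (hβ hkl))
      (fun k => mod_two_eq_of_neg_one_pow_mul_pos
        (neg_one_pow_numAbove_mul_eval_pos hGsplit hGlc (hne k)) (hsign k))
      (fun k => hG ▸ numAbove_le_card _ _))

theorem interlaces_roots_sum_C_mul : Interlaces ↑(List.ofFn β) (∑ j, C (w j) * f j).roots := by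
  induction n generalizing f with
  | zero =>
    exact interlaces_roots_sum_C_mul_of_eval_ne_zero hw hβ hdeg hlc hroots hint hG finZeroElim
  | succ n ih =>
    by_cases hne : ∀ k, (∑ j, C (w j) * f j).eval (β k) ≠ 0
    · exact interlaces_roots_sum_C_mul_of_eval_ne_zero hw hβ hdeg hlc hroots hint hG hne
    push Not at hne
    obtain ⟨k, hk⟩ := hne
    have hfk : ∀ j, (f j).eval (β k) = 0 :=
      eval_eq_zero_of_eval_sum_C_mul_eq_zero hw (ε := (-1) ^ ((k : ℕ) + 1)) (by simp)
        (fun j => neg_one_pow_mul_eval_nonneg_of_interlaces hβ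
          ((hroots j).trans (hdeg j).symm) (hlc j) (hint j) k) hk
    choose g hg using fun j => dvd_iff_isRoot.2 (hfk j)
    have hg0 : ∀ j, g j ≠ 0 := fun j h0 => (hlc j).ne' (by simp [hg j, h0])
    have hGfac : ∑ j, C (w j) * f j = (X - C (β k)) * ∑ j, C (w j) * g j := by
      simp_rw [hg, Finset.mul_sum, mul_left_comm]
    have hH0 : ∑ j, C (w j) * g j ≠ 0 := fun h0 => (leadingCoeff_sum_C_mul_pos hw hlc hdeg).ne'
      (by rw [hGfac, h0, mul_zero, leadingCoeff_zero])
    rw [hGfac, interlaces_ofFn_roots_X_sub_C_mul_iff hH0]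
    refine ih (hβ.comp_monotone (Fin.strictMono_succAbove k).monotone) (f := g)
      (fun j => ?_) (fun j => ?_) (fun j => ?_) (fun j => ?_) ?_
    · have := hdeg j
      rw [hg j, natDegree_mul (X_sub_C_ne_zero _) (hg0 j), natDegree_X_sub_C] at this
      omega
    · simpa [hg j, leadingCoeff_mul] using hlc j
    · simpa [hg j, roots_X_sub_C_mul _ (hg0 j)] using hroots j
    · exact (interlaces_ofFn_roots_X_sub_C_mul_iff (hg0 j)).1 (hg j ▸ hint j)
    · simpa [hGfac, roots_X_sub_C_mul _ hH0] using hG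

theorem exists_numAbove_roots_eq_numAbove_roots_sum_C_mul (x : ℝ) :
    ∃ j, numAbove (f j).roots x = numAbove (∑ j, C (w j) * f j).roots x := by
  have hGint := interlaces_roots_sum_C_mul hw hβ hdeg hlc hroots hint hG
  have hGlc := leadingCoeff_sum_C_mul_pos hw hlc hdeg
  have hGsplit := hG.trans (natDegree_sum_C_mul hw hlc hdeg).symm
  set G := ∑ j, C (w j) * f j
  obtain ⟨y, hfy, hGy⟩ := ((eventually_all.2 fun j =>
    eventually_nhdsGT_numAbove_eq (f j).roots x).and
      (eventually_nhdsGT_numAbove_eq G.roots x)).exists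
  have hGy0 : G.eval y ≠ 0 := fun h0 =>
    hGy.2 ((mem_roots (leadingCoeff_ne_zero.1 hGlc.ne')).2 h0)
  simp only [← (hfy _).1, ← hGy.1]
  by_contra hne
  push Not at hne
  -- All counts lie in `{c, c + 1}` with `c = numAbove β y`, so the `f j` share the other value.
  have hsame : ∀ j, numAbove (f j).roots y =
      2 * numAbove ↑(List.ofFn β) y + 1 - numAbove G.roots y := fun j => by
    have := hint j y
    have := hGint y
    have := hne j
    omega
  have hpos : 0 < (-1) ^ (2 * numAbove ↑(List.ofFn β) y + 1 - numAbove G.roots y) * G.eval y :=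
    lt_of_le_of_ne (mul_eval_sum_C_mul_nonneg hw fun j => hsame j ▸
        neg_one_pow_numAbove_mul_eval_nonneg ((hroots j).trans (hdeg j).symm) (hlc j) y)
      (by simp [hGy0])
  have := mod_two_eq_of_neg_one_pow_mul_pos
    (neg_one_pow_numAbove_mul_eval_pos hGsplit hGlc hGy0) hpos
  have := hGint y
  omega

end CommonInterlacing

end RootInterlacing

open RootInterlacing

theorem roots_of_convex_combination_in_hull_general (n m : ℕ) (hm : 0 < m)
    (f : Fin m → Polynomial ℝ)
    (hdeg : ∀ j, (f j).natDegree = n)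
    (hlead : ∀ j, 0 < (f j).leadingCoeff)
    (ρ : Fin m → Fin n → ℝ)
    (hρa : ∀ j, Antitone (ρ j))
    (hρ : ∀ j, (↑(List.ofFn (ρ j)) : Multiset ℝ) = (f j).roots)
    (hci : ∃ β : Fin n → ℝ, Antitone β ∧ (∀ j i, β i ≤ ρ j i) ∧
        (∀ j, ∀ i : Fin n, 0 < (i : ℕ) →
          ρ j i ≤ β ⟨(i : ℕ) - 1, lt_of_le_of_lt (Nat.sub_le _ _) i.isLt⟩))
    (lam : Fin m → ℝ) (hlam : ∀ j, 0 ≤ lam j) (hlam1 : (∑ j, lam j) = 1)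
    (τ : Fin n → ℝ) (hτa : Antitone τ)
    (hτ : (↑(List.ofFn τ) : Multiset ℝ) = (∑ j, Polynomial.C (lam j) * f j).roots) :
    ∀ i : Fin n,
      (Finset.univ.inf' (Finset.univ_nonempty_iff.mpr (Fin.pos_iff_nonempty.mp hm))
          fun j => ρ j i) ≤ τ i ∧
        τ i ≤ Finset.univ.sup' (Finset.univ_nonempty_iff.mpr (Fin.pos_iff_nonempty.mp hm))
          fun j => ρ j i := by
  obtain ⟨β, hβ, hlow, hhigh⟩ := hci
  have : Nonempty {j // 0 < lam j} := by
    obtain ⟨j, -, hj⟩ :=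
      Finset.exists_lt_of_sum_lt (s := univ) (f := fun _ => (0 : ℝ)) (g := lam) (by simp [hlam1])
    exact ⟨⟨j, hj⟩⟩
  have hsum : ∑ j : {j // 0 < lam j}, C (lam j) * f j = ∑ j, C (lam j) * f j := by
    rw [← Finset.sum_subtype {j | 0 < lam j} (by simp) fun j => C (lam j) * f j,
      Finset.sum_filter_of_ne]
    intro j _ hj
    by_contra h
    exact hj (by simp [le_antisymm (not_lt.1 h) (hlam j)])
  have hcount : ∀ x, ∃ j, numAbove ↑(List.ofFn (ρ j)) x = numAbove ↑(List.ofFn τ) x := by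
    intro x
    obtain ⟨j, hj⟩ := exists_numAbove_roots_eq_numAbove_roots_sum_C_mul
      (f := fun j : {j // 0 < lam j} => f j) (fun j => j.2) hβ (fun j => hdeg j)
      (fun j => hlead j) (fun j => by simp [← hρ j])
      (fun j => hρ j ▸ interlaces_ofFn_of_le hβ (hρa j) (hlow j) (hhigh j))
      (by rw [hsum, ← hτ]; simp) x
    exact ⟨j, by rw [hρ, hj, hsum, hτ]⟩
  intro i
  constructor
  · refine le_of_forall_lt fun x hx => ?_
    obtain ⟨j, hj⟩ := hcount x
    rw [← lt_numAbove_ofFn_iff hτa i x, ← hj, lt_numAbove_ofFn_iff (hρa j)]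
    exact hx.trans_le (Finset.inf'_le _ (mem_univ j))
  · refine le_of_not_gt fun hx => ?_
    obtain ⟨j, hj⟩ := hcount (univ.sup' _ fun j => ρ j i)
    have := (lt_numAbove_ofFn_iff hτa i _).2 hx
    rw [← hj, lt_numAbove_ofFn_iff (hρa j)] at this
    exact (Finset.le_sup' (fun j => ρ j i) (mem_univ j)).not_gt this

/-- If real-rooted polynomials `f₁,…,f_m` of degree `n` with positive leading coefficients
have a common interlacing, then for every convex combination, the `i`-th largest root `τ i`
of the combination lies between the minimum and the maximum of the `i`-th largest roots
`ρ j i` of the `f j`. -/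
theorem roots_of_convex_combination_in_hull (n m : ℕ) (hm : 0 < m)
    (f : Fin m → Polynomial ℝ)
    (hdeg : ∀ j, (f j).natDegree = n)
    (hlead : ∀ j, 0 < (f j).leadingCoeff)
    (hroots : ∀ j, (f j).roots.card = n)
    (ρ : Fin m → Fin n → ℝ)
    (hρa : ∀ j, Antitone (ρ j))
    (hρ : ∀ j, (↑(List.ofFn (ρ j)) : Multiset ℝ) = (f j).roots)
    (hci : ∃ β : Fin n → ℝ, Antitone β ∧ (∀ j i, β i ≤ ρ j i) ∧
        (∀ j, ∀ i : Fin n, 0 < (i : ℕ) →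
          ρ j i ≤ β ⟨(i : ℕ) - 1, lt_of_le_of_lt (Nat.sub_le _ _) i.isLt⟩))
    (lam : Fin m → ℝ) (hlam : ∀ j, 0 ≤ lam j) (hlam1 : (∑ j, lam j) = 1)
    (τ : Fin n → ℝ) (hτa : Antitone τ)
    (hτ : (↑(List.ofFn τ) : Multiset ℝ) = (∑ j, Polynomial.C (lam j) * f j).roots) :
    ∀ i : Fin n,
      (Finset.univ.inf' (Finset.univ_nonempty_iff.mpr (Fin.pos_iff_nonempty.mp hm))
          fun j => ρ j i) ≤ τ i ∧
        τ i ≤ Finset.univ.sup' (Finset.univ_nonempty_iff.mpr (Fin.pos_iff_nonempty.mp hm))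
          fun j => ρ j i :=
  roots_of_convex_combination_in_hull_general n m hm f hdeg hlead ρ hρa hρ hci lam hlam hlam1 τ hτa
    hτ
end

section
/- Let A be an n×n Hermitian complex matrix and v ∈ ℂⁿ. Then the characteristic polynomial of A + μvv* is an affine (degree ≤ 1) function of μ; that is, there exist polynomials P, Q ∈ ℂ[x] such that det(xI − (A + μvv*)) = P(x) + μ·Q(x) for all μ ∈ ℂ. Moreover, Q has degree n−1 with negative leading coefficient when v ≠ 0. -/
/-!
The characteristic matrix of `A + μ vv*` is `XI - A` plus the rank-one matrix `(-μ v) v*`, so the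
matrix determinant lemma `det (M + u wᵀ) = det M + wᵀ (adj M) u` shows that the characteristic
polynomial is affine in `μ`. That lemma is usually stated for invertible `M`; it extends to any
`M` whose determinant is a non-zero-divisor, such as the monic `det (XI - A)`, by passing to the
fraction ring. The slope `Q = charpoly (A + vv*) - charpoly A` is a difference of two monic
polynomials of degree `n`, and its `X ^ (n - 1)` coefficient is `-trace (vv*) = -‖v‖² < 0`.
-/

open Polynomial
open scoped nonZeroDivisors ComplexOrder

namespace Matrix

variable {R : Type*} [CommRing R] {n : Type*} [Fintype n] [DecidableEq n]

theorem det_add_vecMulVec_of_isUnit {M : Matrix n n R} (hM : IsUnit M.det) (u w : n → R) :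
    (M + vecMulVec u w).det = M.det + w ⬝ᵥ M.adjugate *ᵥ u := by
  have hfactor : M + vecMulVec u w = M * (1 + vecMulVec (M⁻¹ *ᵥ u) w) := by
    rw [Matrix.mul_add, Matrix.mul_one, mul_vecMulVec, mulVec_mulVec,
      mul_nonsing_inv _ hM, one_mulVec]
  rw [hfactor, det_mul, vecMulVec_eq Unit, det_one_add_replicateCol_mul_replicateRow,
    mul_add, mul_one, ← smul_eq_mul, ← dotProduct_smul,
    det_smul_inv_mulVec_eq_cramer _ _ hM, cramer_eq_adjugate_mulVec]

theorem det_add_vecMulVec {M : Matrix n n R} (hM : M.det ∈ R⁰) (u w : n → R) :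
    (M + vecMulVec u w).det = M.det + w ⬝ᵥ M.adjugate *ᵥ u := by
  let φ : R →+* FractionRing R := algebraMap R (FractionRing R)
  have hunit : IsUnit (φ.mapMatrix M).det := by
    rw [← RingHom.map_det]
    exact IsLocalization.map_units (FractionRing R) ⟨_, hM⟩
  apply IsFractionRing.injective R (FractionRing R)
  have hmap : φ.mapMatrix (vecMulVec u w) = vecMulVec (φ ∘ u) (φ ∘ w) := by
    ext i j; simp [vecMulVec_apply]
  rw [RingHom.map_det, map_add, hmap, det_add_vecMulVec_of_isUnit hunit, map_add,
    RingHom.map_det, RingHom.map_dotProduct]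
  congr 2
  funext i
  rw [Function.comp_apply, RingHom.map_mulVec, ← RingHom.mapMatrix_apply, RingHom.map_adjugate]

theorem charmatrix_add_smul_vecMulVec (A : Matrix n n R) (r : R) (u w : n → R) :
    charmatrix (A + r • vecMulVec u w) = charmatrix A + vecMulVec (-C r • (C ∘ u)) (C ∘ w) := by
  refine Matrix.ext fun i j => ?_
  simp only [charmatrix_apply, add_apply, smul_apply, vecMulVec_apply, smul_eq_mul,
    Pi.smul_apply, Function.comp_apply, map_add, map_mul]
  ring

theorem charpoly_add_smul_vecMulVec (A : Matrix n n R) (r : R) (u w : n → R) :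
    (A + r • vecMulVec u w).charpoly =
      A.charpoly - C r * ((C ∘ w) ⬝ᵥ (charmatrix A).adjugate *ᵥ (C ∘ u)) := by
  rw [charpoly, charmatrix_add_smul_vecMulVec,
    det_add_vecMulVec A.charpoly_monic.mem_nonZeroDivisors, mulVec_smul, dotProduct_smul,
    smul_eq_mul, charpoly]
  ring

theorem charpoly_add_smul_vecMulVec_eq_add_C_mul (A : Matrix n n R) (r : R) (u w : n → R) :
    (A + r • vecMulVec u w).charpoly =
      A.charpoly + C r * ((A + vecMulVec u w).charpoly - A.charpoly) := by
  have h1 := charpoly_add_smul_vecMulVec A 1 u w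
  rw [one_smul, map_one, one_mul] at h1
  rw [charpoly_add_smul_vecMulVec, h1]
  ring

theorem coeff_charpoly_add_sub_charpoly [Nonempty n] (A B : Matrix n n R) :
    ((A + B).charpoly - A.charpoly).coeff (Fintype.card n - 1) = -B.trace := by
  have hA := trace_eq_neg_charpoly_coeff A
  have hAB := trace_eq_neg_charpoly_coeff (A + B)
  rw [trace_add] at hAB
  rw [coeff_sub]
  linear_combination hAB - hA

theorem degree_charpoly_add_sub_charpoly_lt [Nontrivial R] (A B : Matrix n n R) :
    ((A + B).charpoly - A.charpoly).degree < Fintype.card n := by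
  have hdeg : ∀ M : Matrix n n R, M.charpoly.degree = Fintype.card n := charpoly_degree_eq_dim
  rw [← hdeg (A + B)]
  exact degree_sub_lt_left (by rw [hdeg, hdeg]) (A + B).charpoly_monic.ne_zero
    (by rw [(A + B).charpoly_monic.leadingCoeff, A.charpoly_monic.leadingCoeff])

theorem natDegree_charpoly_add_sub_charpoly [Nontrivial R] [Nonempty n] (A B : Matrix n n R)
    (hB : B.trace ≠ 0) :
    ((A + B).charpoly - A.charpoly).natDegree = Fintype.card n - 1 := by
  have hcoeff : ((A + B).charpoly - A.charpoly).coeff (Fintype.card n - 1) ≠ 0 := by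
    rwa [coeff_charpoly_add_sub_charpoly, neg_ne_zero]
  have hlt := (natDegree_lt_iff_degree_lt (fun h => hcoeff (by rw [h, coeff_zero]))).mpr
    (degree_charpoly_add_sub_charpoly_lt A B)
  exact natDegree_eq_of_le_of_coeff_ne_zero (by omega) hcoeff

theorem leadingCoeff_charpoly_add_sub_charpoly [Nontrivial R] [Nonempty n] (A B : Matrix n n R)
    (hB : B.trace ≠ 0) :
    ((A + B).charpoly - A.charpoly).leadingCoeff = -B.trace := by
  rw [leadingCoeff, natDegree_charpoly_add_sub_charpoly A B hB, coeff_charpoly_add_sub_charpoly]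

end Matrix

theorem charpoly_rank_one_update_affine_general (n : ℕ) (A : Matrix (Fin n) (Fin n) ℂ)
    (v : Fin n → ℂ) :
    ∃ P Q : Polynomial ℂ,
      (∀ μ : ℂ, (A + μ • Matrix.vecMulVec v (star v)).charpoly = P + Polynomial.C μ * Q) ∧
      (v ≠ 0 → Q.natDegree = n - 1 ∧ ∃ c : ℝ, c < 0 ∧ Q.leadingCoeff = (c : ℂ)) := by
  refine ⟨A.charpoly, (A + Matrix.vecMulVec v (star v)).charpoly - A.charpoly,
    fun μ => A.charpoly_add_smul_vecMulVec_eq_add_C_mul μ v (star v), fun hv => ?_⟩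
  have : Nonempty (Fin n) := not_isEmpty_iff.mp fun _ => hv (Subsingleton.elim _ _)
  have hpos : 0 < (Matrix.vecMulVec v (star v)).trace := by
    rwa [Matrix.trace_vecMulVec, Matrix.dotProduct_self_star_pos_iff]
  obtain ⟨c, hc, hcv⟩ := RCLike.neg_iff_exists_ofReal.mp (neg_neg_of_pos hpos)
  refine ⟨by simpa using A.natDegree_charpoly_add_sub_charpoly _ hpos.ne', c, hc, ?_⟩
  rw [A.leadingCoeff_charpoly_add_sub_charpoly _ hpos.ne', ← hcv]
  rfl

/-- For a Hermitian matrix `A` and a vector `v`, the characteristic polynomial of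
`A + μ·vv*` is an affine function of `μ`; moreover the polynomial coefficient `Q` of `μ`
has degree `n - 1` and a negative (real) leading coefficient when `v ≠ 0`. -/
theorem charpoly_rank_one_update_affine (n : ℕ) (A : Matrix (Fin n) (Fin n) ℂ)
    (hA : A.IsHermitian) (v : Fin n → ℂ) :
    ∃ P Q : Polynomial ℂ,
      (∀ μ : ℂ, (A + μ • Matrix.vecMulVec v (star v)).charpoly = P + Polynomial.C μ * Q) ∧
      (v ≠ 0 → Q.natDegree = n - 1 ∧ ∃ c : ℝ, c < 0 ∧ Q.leadingCoeff = (c : ℂ)) :=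
  charpoly_rank_one_update_affine_general n A v
end

section
/- Let D be a unitary d×d matrix with rank(D − I_d) = 1 and A a Hermitian d×d matrix. Then DAD* − A is a Hermitian matrix of rank at most 2 with trace zero; consequently there exist vectors u, v ∈ ℂ^d such that DAD* − A = uu* − vv*. -/
/-!
Write `D = 1 + N`. Since `rank N = 1`, `N = p q*`, and expanding
`D A D* - A = N A + A N* + N A N*` gives `p (Aq)* + (Aq) p* + (q* A q) p p*`. The scalar `q* A q`
is real, so this equals `p w* + w p*` with `w = Aq + (q* A q / 2) p`, and polarization
turns `p w* + w p*` into `u u* - v v*`. The trace vanishes because trace is invariant under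
unitary conjugation.
-/

open scoped Matrix

theorem mul_mul_star_sub_self {R : Type*} [Ring R] [StarRing R] (d a : R) :
    d * a * star d - a = (d - 1) * a + a * star (d - 1) + (d - 1) * a * star (d - 1) := by
  rw [star_sub, star_one]
  noncomm_ring

namespace Matrix

variable {m n K : Type*}

theorem rank_add_le [Field K] [Finite m] [Fintype n] (A B : Matrix m n K) :
    (A + B).rank ≤ A.rank + B.rank := by
  have := Fintype.ofFinite m
  rw [rank, rank, rank, mulVecLin_add]
  exact (Submodule.finrank_mono (LinearMap.range_add_le _ _)).trans
    (Submodule.finrank_add_le_finrank_add_finrank _ _)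

theorem exists_eq_vecMulVec_of_rank_le_one [Field K] [Finite m] [Fintype n]
    {N : Matrix m n K} (h : N.rank ≤ 1) : ∃ p q, N = vecMulVec p q := by
  classical
  have := Fintype.ofFinite m
  obtain ⟨v, hv⟩ := finrank_le_one_iff.mp h
  choose c hc using fun j => hv ⟨N *ᵥ Pi.single j 1, LinearMap.mem_range_self _ _⟩
  refine ⟨v, c, ext fun i j => ?_⟩
  have := congr_arg (fun w : LinearMap.range N.mulVecLin => (w : m → K) i) (hc j)
  simpa [vecMulVec_apply, mul_comm] using this.symm

theorem vecMulVec_add_vecMulVec_star_eq_sub [Field K] [StarRing K] [NeZero (2 : K)]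
    (x y : n → K) :
    vecMulVec x (star y) + vecMulVec y (star x) =
      vecMulVec (x + (2⁻¹ : K) • y) (star (x + (2⁻¹ : K) • y)) -
        vecMulVec (x - (2⁻¹ : K) • y) (star (x - (2⁻¹ : K) • y)) := by
  ext i j
  simp only [add_apply, sub_apply, vecMulVec_apply, Pi.star_apply, Pi.add_apply, Pi.sub_apply,
    Pi.smul_apply, smul_eq_mul, star_add, star_sub, star_mul', star_inv₀, star_ofNat]
  linear_combination -(x i * star (y j) + y i * star (x j)) * mul_inv_cancel₀ (two_ne_zero' K)

variable [Fintype n]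

theorem IsHermitian.isSelfAdjoint_star_dotProduct_mulVec [CommRing K] [StarRing K]
    {A : Matrix n n K} (hA : A.IsHermitian) (x : n → K) :
    IsSelfAdjoint (star x ⬝ᵥ A *ᵥ x) := by
  rw [IsSelfAdjoint, ← star_dotProduct_star, star_star, star_mulVec, hA.eq]
  exact (dotProduct_mulVec _ _ _).symm

theorem IsHermitian.vecMulVec_conj_expansion [Field K] [StarRing K] [NeZero (2 : K)]
    {A : Matrix n n K} (hA : A.IsHermitian) (p q : n → K) :
    vecMulVec p (star q) * A + A * (vecMulVec p (star q))ᴴ +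
        vecMulVec p (star q) * A * (vecMulVec p (star q))ᴴ =
      vecMulVec p (star (A *ᵥ q + (star q ⬝ᵥ A *ᵥ q / 2) • p)) +
        vecMulVec (A *ᵥ q + (star q ⬝ᵥ A *ᵥ q / 2) • p) (star p) := by
  set r := star q ⬝ᵥ A *ᵥ q
  have hr : star r = r := hA.isSelfAdjoint_star_dotProduct_mulVec q
  have hNA : vecMulVec p (star q) * A = vecMulVec p (star (A *ᵥ q)) := by
    rw [vecMulVec_mul, star_mulVec, hA.eq]
  have hAN : A * (vecMulVec p (star q))ᴴ = vecMulVec (A *ᵥ q) (star p) := by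
    rw [conjTranspose_vecMulVec, star_star, mul_vecMulVec]
  have hNAN : vecMulVec p (star (A *ᵥ q)) * (vecMulVec p (star q))ᴴ =
      r • vecMulVec p (star p) := by
    rw [conjTranspose_vecMulVec, star_star, vecMulVec_mul_vecMulVec, vecMulVec_smul, ← hr,
      star_dotProduct]
  rw [hNA, hAN, hNAN, star_add, star_smul, star_div₀, hr, star_ofNat, vecMulVec_add,
    add_vecMulVec, vecMulVec_smul, smul_vecMulVec, add_add_add_comm, ← add_smul, add_halves]

end Matrix

open Matrix in
/-- For a unitary `D` with `rank (D - I) = 1` and a Hermitian `A`, the matrix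
`D A D* - A` is Hermitian of rank at most `2` with trace zero, and can be written as
`uu* - vv*` for some vectors `u`, `v`. -/
theorem conj_sub_self_rank_two (d : ℕ) (D A : Matrix (Fin d) (Fin d) ℂ)
    (hD : D ∈ Matrix.unitaryGroup (Fin d) ℂ) (hrank : (D - 1).rank = 1)
    (hA : A.IsHermitian) :
    (D * A * Dᴴ - A).IsHermitian ∧ (D * A * Dᴴ - A).rank ≤ 2 ∧
      (D * A * Dᴴ - A).trace = 0 ∧
      ∃ u v : Fin d → ℂ,
        D * A * Dᴴ - A = Matrix.vecMulVec u (star u) - Matrix.vecMulVec v (star v) := by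
  obtain ⟨p, q, hpq⟩ := exists_eq_vecMulVec_of_rank_le_one hrank.le
  have hpolar : D * A * Dᴴ - A = vecMulVec p (star (A *ᵥ star q + (q ⬝ᵥ A *ᵥ star q / 2) • p)) +
      vecMulVec (A *ᵥ star q + (q ⬝ᵥ A *ᵥ star q / 2) • p) (star p) := by
    rw [← star_eq_conjTranspose, mul_mul_star_sub_self, star_eq_conjTranspose, hpq]
    simpa only [star_star] using hA.vecMulVec_conj_expansion p (star q)
  rw [vecMulVec_add_vecMulVec_star_eq_sub] at hpolar
  refine ⟨(isHermitian_mul_mul_conjTranspose D hA).sub hA, ?_, ?_, _, _, hpolar⟩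
  · rw [hpolar, sub_eq_add_neg, ← neg_vecMulVec]
    exact (rank_add_le _ _).trans (add_le_add (rank_vecMulVec_le _ _) (rank_vecMulVec_le _ _))
  · rw [trace_sub, trace_mul_cycle, ← star_eq_conjTranspose, mem_unitaryGroup_iff'.mp hD,
      one_mul, sub_self]
end

section
/- Let γ be a labeling of the oriented edges of a finite graph G by elements of S_r (with γ(−e) = γ(e)⁻¹), let H be the r-covering of G determined by γ, and let std denote the standard (r−1)-dimensional representation of S_r. Then the characteristic polynomial of the adjacency matrix of H equals the characteristic polynomial of A_G times the characteristic polynomial of A_{γ,std}; equivalently, the multiset of new eigenvalues of the covering H equals the spectrum of A_{γ,std}. -/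
/-!
The adjacency matrix of `H` is the block matrix whose `(u, v)`-block is `∑_{e : u → v} P(γ e)`,
`P` the permutation representation. Conjugating every block by the matrix `U` that splits `P` into
`triv ⊕ std` conjugates the whole matrix by `diag(U, …, U)`, which does not change its
characteristic polynomial. After regrouping the coordinates, the conjugated matrix is block
diagonal, with the `triv` part equal to `A_G` and the `std` part equal to `A_{γ,std}`.
-/

open Matrix

namespace Matrix

variable {n V k l m R : Type*} [Fintype n] [DecidableEq n] [Fintype V] [DecidableEq V]
  [Fintype k] [DecidableEq k] [Fintype l] [DecidableEq l] [Fintype m] [DecidableEq m]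
  [CommRing R]

theorem charpoly_eq_of_mul_eq_mul {A B W : Matrix n n R} (hW : IsUnit W) (h : A * W = W * B) :
    A.charpoly = B.charpoly := by
  obtain ⟨W, rfl⟩ := hW
  have hB : B = W.inv * (A * W) := by rw [h, ← mul_assoc, W.inv_val, one_mul]
  rw [hB, charpoly_mul_comm, mul_assoc, W.val_inv, mul_one]

theorem charpoly_comp_eq_of_blocks_mul_eq_mul {M N : Matrix V V (Matrix m m R)}
    {U : Matrix m m R} (hU : IsUnit U) (h : ∀ u v, M u v * U = U * N u v) :
    (comp V V m m R M).charpoly = (comp V V m m R N).charpoly := by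
  refine charpoly_eq_of_mul_eq_mul (W := comp V V m m R (scalar V U)) ?_ ?_
  · exact (isUnit_comp_iff ..).mpr (hU.map (scalar V))
  · simp only [← compRingEquiv_apply, ← map_mul]
    congr 1
    ext1 u v
    simp [scalar_apply, h]

theorem charpoly_comp_reindex (e : k ≃ m) (M : Matrix V V (Matrix k k R)) :
    (comp V V m m R fun u v => reindex e e (M u v)).charpoly = (comp V V k k R M).charpoly := by
  rw [← charpoly_reindex (Equiv.prodCongr (Equiv.refl V) e) (comp V V k k R M)]
  congr 1

theorem charpoly_comp_fromBlocks_zero (A : Matrix V V (Matrix k k R))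
    (B : Matrix V V (Matrix l l R)) :
    (comp V V (k ⊕ l) (k ⊕ l) R fun u v => fromBlocks (A u v) 0 0 (B u v)).charpoly =
      (comp V V k k R A).charpoly * (comp V V l l R B).charpoly := by
  rw [← charpoly_reindex (Equiv.prodSumDistrib V k l),
    ← charpoly_fromBlocks_zero₁₂ _ (0 : Matrix (V × l) (V × k) R)]
  congr 1
  ext (⟨u, i⟩ | ⟨u, i⟩) (⟨v, j⟩ | ⟨v, j⟩) <;> rfl

theorem charpoly_comp_of_unique [Unique k] (M : Matrix V V (Matrix k k R)) :
    (comp V V k k R M).charpoly = (M.map fun b => b default default).charpoly := by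
  rw [← charpoly_reindex (Equiv.prodUnique V k)]
  rfl

end Matrix

section TwistedAdjacency

variable {V E m R : Type*} [DecidableEq V] [Fintype E] [AddCommMonoid R] (tl hd : E → V)

-- The paper's `A_{γ,ρ}` with `ρ ∘ γ` given as one edge labelling, kept as a matrix of blocks.
def twistedAdjacency (ρ : E → Matrix m m R) : Matrix V V (Matrix m m R) :=
  of fun u v => ∑ e ∈ Finset.univ.filter (fun e => tl e = u ∧ hd e = v), ρ e

theorem twistedAdjacency_apply_apply (ρ : E → Matrix m m R) (u v : V) (i j : m) :
    twistedAdjacency tl hd ρ u v i j =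
      ∑ e ∈ Finset.univ.filter (fun e => tl e = u ∧ hd e = v), ρ e i j := by
  simp [twistedAdjacency, Matrix.sum_apply]

theorem twistedAdjacency_reindex_fromBlocks {k l : Type*} (ι : m ≃ k ⊕ l)
    (a : E → Matrix k k R) (b : E → Matrix l l R) :
    twistedAdjacency tl hd (fun e => reindex ι.symm ι.symm (fromBlocks (a e) 0 0 (b e))) =
      fun u v => reindex ι.symm ι.symm
        (fromBlocks (twistedAdjacency tl hd a u v) 0 0 (twistedAdjacency tl hd b u v)) := by
  ext u v i j
  rcases hi : ι i with i | i <;> rcases hj : ι j with j | j <;>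
    simp [twistedAdjacency_apply_apply, hi, hj]

end TwistedAdjacency

theorem covering_charpoly_eq_base_mul_std_general
    (r : ℕ)
    (std : Equiv.Perm (Fin r) →* Matrix (Fin (r - 1)) (Fin (r - 1)) ℂ)
    (hstd : ∃ (ι : Fin r ≃ (Unit ⊕ Fin (r - 1))) (U : Matrix (Fin r) (Fin r) ℂ),
      IsUnit U ∧ ∀ g : Equiv.Perm (Fin r),
        (Matrix.of fun i j : Fin r => if i = g j then (1 : ℂ) else 0) * U =
          U * ((Matrix.reindex ι.symm ι.symm)
            (Matrix.fromBlocks (1 : Matrix Unit Unit ℂ) 0 0 (std g))))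
    (V E : Type) [Fintype V] [Fintype E] [DecidableEq V]
    (hd tl : E → V)
    (γ : E → Equiv.Perm (Fin r))
    (AG : Matrix V V ℂ)
    (hAG : ∀ u v, AG u v =
      ((Finset.univ.filter (fun e => tl e = u ∧ hd e = v)).card : ℂ))
    (AH : Matrix (V × Fin r) (V × Fin r) ℂ)
    (hAH : ∀ u v i j, AH (u, i) (v, j) =
      ∑ e ∈ Finset.univ.filter (fun e => tl e = u ∧ hd e = v),
        (if i = γ e j then (1 : ℂ) else 0))
    (Astd : Matrix (V × Fin (r - 1)) (V × Fin (r - 1)) ℂ)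
    (hAstd : ∀ u v i j, Astd (u, i) (v, j) =
      ∑ e ∈ Finset.univ.filter (fun e => tl e = u ∧ hd e = v), std (γ e) i j) :
    AH.charpoly = AG.charpoly * Astd.charpoly := by
  obtain ⟨ι, U, hU, hUg⟩ := hstd
  let perm (g : Equiv.Perm (Fin r)) : Matrix (Fin r) (Fin r) ℂ :=
    of fun i j => if i = g j then 1 else 0
  have hAH_blocks : AH = comp V V _ _ ℂ (twistedAdjacency tl hd fun e => perm (γ e)) := by
    ext ⟨u, i⟩ ⟨v, j⟩
    simp [hAH, twistedAdjacency_apply_apply, perm]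
  have hAstd_blocks : Astd = comp V V _ _ ℂ (twistedAdjacency tl hd fun e => std (γ e)) := by
    ext ⟨u, i⟩ ⟨v, j⟩
    simp [hAstd, twistedAdjacency_apply_apply]
  have hAG_blocks : AG = (twistedAdjacency tl hd fun _ => (1 : Matrix Unit Unit ℂ)).map
      fun b => b () () := by
    ext u v
    simp [hAG, twistedAdjacency_apply_apply]
  have hconj : ∀ u v, twistedAdjacency tl hd (fun e => perm (γ e)) u v * U =
      U * twistedAdjacency tl hd (fun e => reindex ι.symm ι.symm
        (fromBlocks (1 : Matrix Unit Unit ℂ) 0 0 (std (γ e)))) u v := by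
    intro u v
    simp only [twistedAdjacency, of_apply, Finset.sum_mul, Finset.mul_sum, perm, hUg]
  rw [hAH_blocks, charpoly_comp_eq_of_blocks_mul_eq_mul hU hconj,
    twistedAdjacency_reindex_fromBlocks]
  refine (charpoly_comp_reindex ι.symm _).trans ((charpoly_comp_fromBlocks_zero _ _).trans ?_)
  rw [charpoly_comp_of_unique, hAG_blocks, hAstd_blocks]

/-- Let `γ` be an `S_r`-labeling of a finite graph `G` (oriented edges `E`, with
`γ (-e) = (γ e)⁻¹`), `H` the associated `r`-covering with adjacency matrix `AH`, and `std`
the standard `(r-1)`-dimensional representation of `S_r`, i.e. a representation such that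
the permutation representation is similar to `triv ⊕ std`.  Then the characteristic
polynomial of `AH` equals the characteristic polynomial of `A_G` times that of
`A_{γ,std}`; equivalently, the new spectrum of `H` is the spectrum of `A_{γ,std}`. -/
theorem covering_charpoly_eq_base_mul_std
    (r : ℕ) (hr : 1 ≤ r)
    (std : Equiv.Perm (Fin r) →* Matrix (Fin (r - 1)) (Fin (r - 1)) ℂ)
    (hstd : ∃ (ι : Fin r ≃ (Unit ⊕ Fin (r - 1))) (U : Matrix (Fin r) (Fin r) ℂ),
      IsUnit U ∧ ∀ g : Equiv.Perm (Fin r),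
        (Matrix.of fun i j : Fin r => if i = g j then (1 : ℂ) else 0) * U =
          U * ((Matrix.reindex ι.symm ι.symm)
            (Matrix.fromBlocks (1 : Matrix Unit Unit ℂ) 0 0 (std g))))
    (V E : Type) [Fintype V] [Fintype E] [DecidableEq V] [DecidableEq E]
    (rev : E → E) (hd tl : E → V)
    (hrev : ∀ e, rev (rev e) = e) (hheadtail : ∀ e, hd (rev e) = tl e)
    (γ : E → Equiv.Perm (Fin r)) (hγ : ∀ e, γ (rev e) = (γ e)⁻¹)
    (AG : Matrix V V ℂ)
    (hAG : ∀ u v, AG u v =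
      ((Finset.univ.filter (fun e => tl e = u ∧ hd e = v)).card : ℂ))
    (AH : Matrix (V × Fin r) (V × Fin r) ℂ)
    (hAH : ∀ u v i j, AH (u, i) (v, j) =
      ∑ e ∈ Finset.univ.filter (fun e => tl e = u ∧ hd e = v),
        (if i = γ e j then (1 : ℂ) else 0))
    (Astd : Matrix (V × Fin (r - 1)) (V × Fin (r - 1)) ℂ)
    (hAstd : ∀ u v i j, Astd (u, i) (v, j) =
      ∑ e ∈ Finset.univ.filter (fun e => tl e = u ∧ hd e = v), std (γ e) i j) :
    AH.charpoly = AG.charpoly * Astd.charpoly :=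
  covering_charpoly_eq_base_mul_std_general r std hstd V E hd tl γ AG hAG AH hAH Astd hAstd
end

section
/- Let Γ be a finite group generated by g₁,…,g_s. Define a random walk (a_n) on Γ by a₀ = 1 and a_n = g_{(n mod s)}·a_{n−1}, g_{(n mod s)}^{−1}·a_{n−1}, or a_{n−1}, each with probability 1/3. Then the distribution of a_n converges to the uniform distribution on Γ as n → ∞. -/
/-!
Each step averages three values of `p n`, so `max p n` never increases and `min p n` never
decreases. Since every generator is used once in every `s` consecutive steps and the walk may
stay put, a word `w` in the generators is reached within a time `T` independent of the starting
time with probability at least `3⁻ᵀ`; taking `T` uniform over the finite group and applying this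
to `p - min p n` lifts the minimum by `3⁻ᵀ` times the spread `max - min`. Hence the spread
contracts by the factor `1 - 3⁻ᵀ` every `T` steps and tends to `0`. As `∑ₓ p n x = 1`, the value
`1 / |Γ|` lies between `min p n` and `max p n`.
-/

open Filter Topology

theorem tendsto_zero_of_antitone_of_le_mul {u : ℕ → ℝ} (hu : Antitone u) (h0 : ∀ n, 0 ≤ u n)
    {r : ℝ} (hr : r < 1) {T : ℕ} (h : ∀ n, u (n + T) ≤ r * u n) : Tendsto u atTop (𝓝 0) := by
  have hL : Tendsto u atTop (𝓝 (⨅ n, u n)) :=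
    tendsto_atTop_ciInf hu ⟨0, by rintro _ ⟨n, rfl⟩; exact h0 n⟩
  have hL_nonneg : 0 ≤ ⨅ n, u n := ge_of_tendsto' hL h0
  have hL_le : ⨅ n, u n ≤ r * ⨅ n, u n :=
    le_of_tendsto_of_tendsto' ((tendsto_add_atTop_iff_nat T).2 hL) (hL.const_mul r) h
  convert hL
  nlinarith

theorem abs_sub_inv_card_le {α : Type*} [Fintype α] [Nonempty α] {f : α → ℝ}
    (hf : ∑ x, f x = 1) (x : α) :
    |f x - 1 / Fintype.card α| ≤ (⨆ y, f y) - ⨅ y, f y := by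
  have hcard : ∑ _y : α, (1 / Fintype.card α : ℝ) = 1 := by simp
  obtain ⟨y, -, hy⟩ := Finset.exists_le_of_sum_le Finset.univ_nonempty (hf.trans hcard.symm).le
  obtain ⟨z, -, hz⟩ := Finset.exists_le_of_sum_le Finset.univ_nonempty (hcard.trans hf.symm).le
  have hx₁ := ciInf_le (Finite.bddBelow_range f) x
  have hx₂ := le_ciSup (Finite.bddAbove_range f) x
  have hy' := ciInf_le (Finite.bddBelow_range f) y
  have hz' := le_ciSup (Finite.bddAbove_range f) z
  rw [abs_le]
  constructor <;> linarith

variable {Γ : Type*}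

def CoversWithin (S : Set Γ) (s : ℕ) (g : ℕ → Γ) : Prop :=
  ∀ a ∈ S, ∀ n, ∃ k < s, g (n + k) = a

theorem coversWithin_range_mod {s : ℕ} (hs : 0 < s) (gen : Fin s → Γ) :
    CoversWithin (Set.range gen) s fun n => gen ⟨n % s, Nat.mod_lt n hs⟩ := by
  rintro _ ⟨i, rfl⟩ n
  refine ⟨(i + s - n % s) % s, Nat.mod_lt _ hs, congrArg gen (Fin.ext ?_)⟩
  have hr : n % s < s := Nat.mod_lt n hs
  change (n + (i + s - n % s) % s) % s = i
  rw [Nat.add_mod_mod, ← Nat.mod_add_mod, Nat.add_sub_cancel' (by omega : n % s ≤ i + s),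
    Nat.add_mod_right, Nat.mod_eq_of_lt i.isLt]

variable [Group Γ]

def IsLazyWalk (g : ℕ → Γ) (p : ℕ → Γ → ℝ) : Prop :=
  ∀ n x, p (n + 1) x = 1 / 3 * p n ((g n)⁻¹ * x) + 1 / 3 * p n (g n * x) + 1 / 3 * p n x

/-- Quantifying over all walks makes `T` depend on `g` and `w` only. -/
def LazyReaches (g : ℕ → Γ) (w : Γ) (T : ℕ) : Prop :=
  ∀ p, IsLazyWalk g p → ∀ n, (∀ k ≥ n, ∀ y, 0 ≤ p k y) →
    ∀ x, (1 / 3 : ℝ) ^ T * p n (w * x) ≤ p (n + T) x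

namespace IsLazyWalk

variable {g : ℕ → Γ} {p : ℕ → Γ → ℝ}

theorem sub_const (h : IsLazyWalk g p) (c : ℝ) : IsLazyWalk g fun n x => p n x - c := by
  intro n x
  dsimp only
  rw [h n x]
  ring

theorem sum_eq [Fintype Γ] (h : IsLazyWalk g p) (n : ℕ) : ∑ x, p n x = ∑ x, p 0 x := by
  induction n with
  | zero => rfl
  | succ n ih =>
    have hmul (a : Γ) : ∑ x, p n (a * x) = ∑ x, p n x := Equiv.sum_comp (Equiv.mulLeft a) (p n)
    simp only [h n, Finset.sum_add_distrib, ← Finset.mul_sum, hmul, ih]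
    ring

theorem third_mul_le (h : IsLazyWalk g p) {n : ℕ} (hn : ∀ y, 0 ≤ p n y) {x y : Γ}
    (hy : y = x ∨ y = g n * x ∨ y = (g n)⁻¹ * x) : 1 / 3 * p n y ≤ p (n + 1) x := by
  have h₁ := hn x
  have h₂ := hn (g n * x)
  have h₃ := hn ((g n)⁻¹ * x)
  rw [h n x]
  rcases hy with rfl | rfl | rfl <;> linarith

theorem pow_mul_le_add (h : IsLazyWalk g p) {n : ℕ} (hp : ∀ k ≥ n, ∀ y, 0 ≤ p k y)
    (j : ℕ) (x : Γ) : (1 / 3 : ℝ) ^ j * p n x ≤ p (n + j) x := by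
  induction j with
  | zero => simp
  | succ j ih =>
    calc (1 / 3 : ℝ) ^ (j + 1) * p n x = 1 / 3 * ((1 / 3) ^ j * p n x) := by ring
      _ ≤ 1 / 3 * p (n + j) x := by gcongr
      _ ≤ p (n + j + 1) x := h.third_mul_le (hp _ (Nat.le_add_right n j)) (Or.inl rfl)

end IsLazyWalk

namespace LazyReaches

variable {g : ℕ → Γ}

theorem one : LazyReaches g 1 0 := by
  intro p _ n _ x
  simp

theorem mul {v w : Γ} {T U : ℕ} (hv : LazyReaches g v T) (hw : LazyReaches g w U) :
    LazyReaches g (v * w) (T + U) := by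
  intro p h n hp x
  have hU := hw p h (n + T) (fun k hk => hp k (by omega)) x
  have hT := hv p h n hp (w * x)
  calc (1 / 3 : ℝ) ^ (T + U) * p n (v * w * x)
      = (1 / 3) ^ U * ((1 / 3) ^ T * p n (v * (w * x))) := by rw [mul_assoc v]; ring
    _ ≤ (1 / 3) ^ U * p (n + T) (w * x) := by gcongr
    _ ≤ p (n + (T + U)) x := by rwa [← add_assoc]

theorem mono {w : Γ} {T U : ℕ} (hw : LazyReaches g w T) (hTU : T ≤ U) : LazyReaches g w U := by
  obtain ⟨j, rfl⟩ := Nat.exists_eq_add_of_le hTU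
  have hwait : LazyReaches g 1 j := fun p h n hp x => by simpa using h.pow_mul_le_add hp j x
  simpa using hw.mul hwait

theorem of_window {a : Γ} {s : ℕ} (ha : ∀ n, ∃ k < s, a = g (n + k) ∨ a = (g (n + k))⁻¹) :
    LazyReaches g a s := by
  intro p h n hp x
  obtain ⟨k, hks, hk⟩ := ha n
  have hwait := h.pow_mul_le_add hp k (a * x)
  have hstep := h.third_mul_le (hp (n + k) (Nat.le_add_right n k))
    (x := x) (y := a * x) (by rcases hk with rfl | rfl <;> simp)
  have hrest := h.pow_mul_le_add (n := n + k + 1) (fun i hi => hp i (by omega)) (s - (k + 1)) x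
  rw [show n + k + 1 + (s - (k + 1)) = n + s by omega] at hrest
  calc (1 / 3 : ℝ) ^ s * p n (a * x)
      = (1 / 3) ^ (s - (k + 1)) * (1 / 3 * ((1 / 3) ^ k * p n (a * x))) := by
        rw [← mul_assoc, ← mul_assoc, ← pow_succ, ← pow_add,
          show s - (k + 1) + 1 + k = s by omega]
    _ ≤ (1 / 3) ^ (s - (k + 1)) * (1 / 3 * p (n + k) (a * x)) := by gcongr
    _ ≤ (1 / 3) ^ (s - (k + 1)) * p (n + k + 1) x := by gcongr
    _ ≤ p (n + s) x := hrest

theorem exists_of_mem_closure {S : Set Γ} {s : ℕ} (hg : CoversWithin S s g) {w : Γ}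
    (hw : w ∈ Subgroup.closure S) : ∃ T, LazyReaches g w T := by
  induction hw using Subgroup.closure_induction'' with
  | mem a ha =>
    exact ⟨s, of_window fun n => (hg a ha n).imp fun k ⟨hk, hka⟩ => ⟨hk, Or.inl hka.symm⟩⟩
  | inv_mem a ha =>
    exact ⟨s, of_window fun n => (hg a ha n).imp fun k ⟨hk, hka⟩ => ⟨hk, Or.inr (by rw [hka])⟩⟩
  | one => exact ⟨0, one⟩
  | mul v w _ _ hv hw =>
    obtain ⟨T, hT⟩ := hv
    obtain ⟨U, hU⟩ := hw
    exact ⟨T + U, hT.mul hU⟩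

theorem exists_forall [Finite Γ] {S : Set Γ} {s : ℕ} (hg : CoversWithin S s g)
    (hS : Subgroup.closure S = ⊤) : ∃ T, ∀ w, LazyReaches g w T := by
  choose T hT using fun w => exists_of_mem_closure hg (hS ▸ Subgroup.mem_top w)
  obtain ⟨U, hU⟩ := (Set.finite_range T).bddAbove
  exact ⟨U, fun w => (hT w).mono (hU ⟨w, rfl⟩)⟩

end LazyReaches

namespace IsLazyWalk

variable [Finite Γ] {g : ℕ → Γ} {p : ℕ → Γ → ℝ} {S : Set Γ} {s : ℕ}

theorem monotone_iInf (h : IsLazyWalk g p) : Monotone fun n => ⨅ x, p n x := by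
  refine monotone_nat_of_le_succ fun n => le_ciInf fun x => ?_
  have hle : ∀ y, ⨅ z, p n z ≤ p n y := ciInf_le (Finite.bddBelow_range _)
  have h₁ := hle ((g n)⁻¹ * x)
  have h₂ := hle (g n * x)
  have h₃ := hle x
  rw [h n x]
  linarith

theorem antitone_iSup (h : IsLazyWalk g p) : Antitone fun n => ⨆ x, p n x := by
  refine antitone_nat_of_succ_le fun n => ciSup_le fun x => ?_
  have hle : ∀ y, p n y ≤ ⨆ z, p n z := le_ciSup (Finite.bddAbove_range _)
  have h₁ := hle ((g n)⁻¹ * x)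
  have h₂ := hle (g n * x)
  have h₃ := hle x
  rw [h n x]
  linarith

theorem exists_spread_le (h : IsLazyWalk g p) (hg : CoversWithin S s g)
    (hS : Subgroup.closure S = ⊤) :
    ∃ T, ∀ n, (⨆ x, p (n + T) x) - ⨅ x, p (n + T) x ≤
      (1 - (1 / 3) ^ T) * ((⨆ x, p n x) - ⨅ x, p n x) := by
  obtain ⟨T, hT⟩ := LazyReaches.exists_forall hg hS
  refine ⟨T, fun n => ?_⟩
  set m := ⨅ x, p n x
  obtain ⟨y, hy⟩ := exists_eq_ciSup_of_finite (f := p n)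
  have hq : ∀ k ≥ n, ∀ x, 0 ≤ p k x - m := fun k hk x =>
    sub_nonneg.2 ((h.monotone_iInf hk).trans (ciInf_le (Finite.bddBelow_range _) x))
  -- the mass sitting at a maximum of `p n` spreads to every `x` within `T` steps
  have hlow : m + (1 / 3) ^ T * ((⨆ x, p n x) - m) ≤ ⨅ x, p (n + T) x := le_ciInf fun x => by
    have hx := hT (y * x⁻¹) _ (h.sub_const m) n hq x
    simp only [inv_mul_cancel_right, hy] at hx
    linarith
  have hhigh : ⨆ x, p (n + T) x ≤ ⨆ x, p n x := h.antitone_iSup (Nat.le_add_right n T)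
  linarith

theorem tendsto_spread (h : IsLazyWalk g p) (hg : CoversWithin S s g)
    (hS : Subgroup.closure S = ⊤) :
    Tendsto (fun n => (⨆ x, p n x) - ⨅ x, p n x) atTop (𝓝 0) := by
  obtain ⟨T, hT⟩ := h.exists_spread_le hg hS
  refine tendsto_zero_of_antitone_of_le_mul
    (fun a b hab => sub_le_sub (h.antitone_iSup hab) (h.monotone_iInf hab))
    (fun n => sub_nonneg.2 (ciInf_le_ciSup (Finite.bddBelow_range _) (Finite.bddAbove_range _)))
    ?_ hT
  have : (0 : ℝ) < (1 / 3) ^ T := by positivity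
  linarith

end IsLazyWalk

/-- Let `Γ` be a finite group generated by `g₁,…,g_s`.  The lazy random walk which at step
`n` multiplies on the left by `g_{n mod s}`, by `g_{n mod s}⁻¹`, or stays put, each with
probability `1/3`, converges in distribution to the uniform distribution on `Γ`.
Here `p n x` is the probability that the walk is at `x` at time `n`. -/
theorem lazy_random_walk_uniform (Γ : Type) [Group Γ] [Fintype Γ] [DecidableEq Γ]
    (s : ℕ) (hs : 0 < s) (gen : Fin s → Γ)
    (hgen : Subgroup.closure (Set.range gen) = ⊤)
    (p : ℕ → Γ → ℝ)
    (hp0 : p 0 = fun x => if x = 1 then 1 else 0)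
    (hpstep : ∀ n x, p (n + 1) x =
      (1 / 3) * p n ((gen ⟨n % s, Nat.mod_lt n hs⟩)⁻¹ * x) +
      (1 / 3) * p n (gen ⟨n % s, Nat.mod_lt n hs⟩ * x) +
      (1 / 3) * p n x) :
    ∀ x : Γ, Filter.Tendsto (fun n => p n x) Filter.atTop
      (nhds (1 / (Fintype.card Γ : ℝ))) := by
  intro x
  have hwalk : IsLazyWalk (fun n => gen ⟨n % s, Nat.mod_lt n hs⟩) p := hpstep
  have hsum (n : ℕ) : ∑ y, p n y = 1 := by simp [hwalk.sum_eq n, hp0]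
  have hspread := hwalk.tendsto_spread (coversWithin_range_mod hs gen) hgen
  rw [tendsto_iff_dist_tendsto_zero]
  exact squeeze_zero (fun n => dist_nonneg) (fun n => abs_sub_inv_card_le (hsum n) x) hspread
end

section
/- Let G be a finite connected graph and d ≥ 1. Every real root of the d-matching polynomial M_{d,G} (the average of the matching polynomials of all d-coverings of G, averaged uniformly over labelings σ : E⁺(G) → S_d) lies in the interval [−ρ(G), ρ(G)], where ρ(G) is the spectral radius of the universal covering tree of G. -/
/-!
Each `d`-covering's matching polynomial is monic of degree `N = |V| d` (only the empty matching
contributes to `X ^ N`) and, by Heilmann–Lieb, has all `N` roots in `[-ρ, ρ]`. For `x` outside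
this interval every factor `x - a` has the same sign `c = ±1`, so `c ^ N` times each of these
polynomials is positive at `x`; hence so is `c ^ N` times their average, which therefore does
not vanish at `x`.
-/

open Polynomial Set

namespace Polynomial

theorem Monic.pow_natDegree_mul_eval_pos {p : ℝ[X]} (hp : p.Monic)
    (hsplit : p.roots.card = p.natDegree) {c x : ℝ} (h : ∀ a ∈ p.roots, 0 < c * (x - a)) :
    0 < c ^ p.natDegree * p.eval x := by
  have heval : p.eval x = (p.roots.map (fun a => x - a)).prod := by
    conv_lhs => rw [← prod_multiset_X_sub_C_of_monic_of_roots_card_eq hp hsplit]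
    simp [eval_multiset_prod, Multiset.map_map]
  have hc : c ^ p.natDegree = (p.roots.map (fun _ => c)).prod := by
    rw [Multiset.map_const', Multiset.prod_replicate, hsplit]
  rw [heval, hc, ← Multiset.prod_map_mul]
  exact Multiset.prod_pos fun y hy => by
    obtain ⟨a, ha, rfl⟩ := Multiset.mem_map.1 hy
    exact h a ha

theorem eval_sum_ne_zero_of_roots_mem_Icc {ι : Type*} [Fintype ι] [Nonempty ι]
    (p : ι → ℝ[X]) {n : ℕ} (hmonic : ∀ i, (p i).Monic) (hdeg : ∀ i, (p i).natDegree = n)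
    (hcard : ∀ i, (p i).roots.card = n) {ρ : ℝ} (hroots : ∀ i, ∀ a ∈ (p i).roots, a ∈ Icc (-ρ) ρ)
    {x : ℝ} (hx : x ∉ Icc (-ρ) ρ) : (∑ i, p i).eval x ≠ 0 := by
  set c : ℝ := if ρ < x then 1 else -1
  have hc : ∀ a ∈ Icc (-ρ) ρ, 0 < c * (x - a) := by
    rintro a ⟨ha₁, ha₂⟩
    simp only [mem_Icc, not_and_or, not_le] at hx
    by_cases hρx : ρ < x
    · simp only [c, if_pos hρx]; linarith
    · simp only [c, if_neg hρx]; rcases hx with hx | hx <;> linarith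
  have hpos : 0 < c ^ n * (∑ i, p i).eval x := by
    rw [eval_finsetSum, Finset.mul_sum]
    refine Finset.sum_pos (fun i _ => ?_) Finset.univ_nonempty
    rw [← hdeg i]
    exact (hmonic i).pow_natDegree_mul_eval_pos (by rw [hcard, hdeg])
      fun a ha => hc a (hroots i a ha)
  exact right_ne_zero_of_mul hpos.ne'

end Polynomial

section MatchingPolynomial

variable {α : Type*} [Fintype α]

noncomputable def matchingPoly (IsMatching : Finset α → Prop) [DecidablePred IsMatching]
    (N : ℕ) : ℝ[X] :=
  ∑ S : Finset α, if IsMatching S then C (-1 : ℝ) ^ S.card * X ^ (N - 2 * S.card) else 0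

variable (IsMatching : Finset α → Prop) [DecidablePred IsMatching] (N : ℕ)

theorem natDegree_matchingPoly_le : (matchingPoly IsMatching N).natDegree ≤ N := by
  refine natDegree_sum_le_of_forall_le _ _ fun S _ => ?_
  split_ifs
  · rw [← C_pow]
    exact (natDegree_C_mul_X_pow_le _ _).trans (Nat.sub_le _ _)
  · simp

variable {IsMatching N}

theorem coeff_matchingPoly_self (h₀ : IsMatching ∅) (hN : Nonempty α → 0 < N) :
    (matchingPoly IsMatching N).coeff N = 1 := by
  rw [matchingPoly, finsetSum_coeff, Finset.sum_eq_single ∅ (fun S _ hS => ?_) (by simp)]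
  · simp [h₀]
  · have : N - 2 * S.card ≠ N := by
      obtain ⟨a, ha⟩ := Finset.nonempty_iff_ne_empty.2 hS
      have := hN ⟨a⟩
      have := Finset.card_pos.2 ⟨a, ha⟩
      omega
    split_ifs
    · rw [← C_pow, coeff_C_mul, coeff_X_pow, if_neg this.symm, mul_zero]
    · exact coeff_zero N

theorem natDegree_matchingPoly (h₀ : IsMatching ∅) (hN : Nonempty α → 0 < N) :
    (matchingPoly IsMatching N).natDegree = N :=
  (natDegree_matchingPoly_le IsMatching N).antisymm
    (le_natDegree_of_ne_zero (by simp [coeff_matchingPoly_self h₀ hN]))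

theorem monic_matchingPoly (h₀ : IsMatching ∅) (hN : Nonempty α → 0 < N) :
    (matchingPoly IsMatching N).Monic := by
  rw [Monic, leadingCoeff, natDegree_matchingPoly h₀ hN, coeff_matchingPoly_self h₀ hN]

end MatchingPolynomial

theorem d_matching_polynomial_real_roots_in_ramanujan_interval_general
    (V E : Type) [Fintype V] [DecidableEq V] [DecidableEq E]
    (hd tl : E → V)
    (Eplus : Finset E)
    (d : ℕ)
    (matchPoly : ({e // e ∈ Eplus} → Equiv.Perm (Fin d)) → Polynomial ℝ)
    (hmp : ∀ σ, matchPoly σ =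
      ∑ S : Finset ({e // e ∈ Eplus} × Fin d),
        if (∀ p ∈ S, ((hd p.1.1, p.2) : V × Fin d) ≠ (tl p.1.1, σ p.1 p.2)) ∧
            (∀ p ∈ S, ∀ q ∈ S, p ≠ q →
              ({(hd p.1.1, p.2), (tl p.1.1, σ p.1 p.2)} : Finset (V × Fin d)) ∩
                {(hd q.1.1, q.2), (tl q.1.1, σ q.1 q.2)} = ∅)
        then Polynomial.C ((-1 : ℝ)) ^ S.card *
          Polynomial.X ^ (Fintype.card V * d - 2 * S.card)
        else 0)
    (Mdg : Polynomial ℝ)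
    (hMdg : Mdg = (Fintype.card ({e // e ∈ Eplus} → Equiv.Perm (Fin d)) : ℝ)⁻¹ •
      ∑ σ : {e // e ∈ Eplus} → Equiv.Perm (Fin d), matchPoly σ)
    (ρ : ℝ)
    (hHL : ∀ σ, (matchPoly σ).roots.card = Fintype.card V * d ∧
      ∀ x ∈ (matchPoly σ).roots, -ρ ≤ x ∧ x ≤ ρ) :
    ∀ x : ℝ, Mdg.IsRoot x → -ρ ≤ x ∧ x ≤ ρ := by
  intro x hx
  by_contra hxρ
  have hmp' : ∀ σ, matchPoly σ = matchingPoly _ (Fintype.card V * d) := hmp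
  have hN : Nonempty ({e // e ∈ Eplus} × Fin d) → 0 < Fintype.card V * d :=
    fun ⟨e, i⟩ => Nat.mul_pos (Fintype.card_pos_iff.2 ⟨hd e⟩) i.pos
  refine eval_sum_ne_zero_of_roots_mem_Icc matchPoly
    (fun σ => hmp' σ ▸ monic_matchingPoly (by simp) hN)
    (fun σ => hmp' σ ▸ natDegree_matchingPoly (by simp) hN)
    (fun σ => (hHL σ).1) (fun σ => (hHL σ).2) hxρ ?_
  rw [IsRoot, hMdg, eval_smul, smul_eq_mul] at hx
  exact (mul_eq_zero.1 hx).resolve_left (by simp)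

/-- Let `G` be a finite connected graph (oriented edges `E` with reversal `rev`, heads `hd`,
tails `tl`, and a choice `Eplus` of positive orientation), and `d ≥ 1`.  For a labeling
`σ : E⁺ → S_d`, `matchPoly σ` is the matching polynomial of the associated `d`-covering of
`G` (a matching being a set of lifted edges, none a loop, with pairwise disjoint endpoint
sets), and the `d`-matching polynomial `Mdg` is the average of `matchPoly σ` over all
labelings.  Let `ρ` be the spectral radius of the universal covering tree, so that (by the
Heilmann–Lieb theorem, hypothesis `hHL`) each `matchPoly σ` is real rooted with all roots
in `[-ρ, ρ]`.  Then every real root of `Mdg` lies in `[-ρ, ρ]`. -/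
theorem d_matching_polynomial_real_roots_in_ramanujan_interval
    (V E : Type) [Fintype V] [Fintype E] [DecidableEq V] [DecidableEq E]
    (rev : E → E) (hd tl : E → V)
    (hrev : ∀ e, rev (rev e) = e) (hrevne : ∀ e, rev e ≠ e)
    (hheadtail : ∀ e, hd (rev e) = tl e)
    (Eplus : Finset E) (hEplus : ∀ e, e ∈ Eplus ↔ rev e ∉ Eplus)
    (hconn : ∀ u v : V, u ≠ v → ∃ l : List E, l.Chain' (fun e e' => hd e = tl e') ∧
      (∃ e0 ∈ l.head?, tl e0 = u) ∧ (∃ e1 ∈ l.getLast?, hd e1 = v))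
    (d : ℕ) (hd1 : 1 ≤ d)
    (matchPoly : ({e // e ∈ Eplus} → Equiv.Perm (Fin d)) → Polynomial ℝ)
    (hmp : ∀ σ, matchPoly σ =
      ∑ S : Finset ({e // e ∈ Eplus} × Fin d),
        if (∀ p ∈ S, ((hd p.1.1, p.2) : V × Fin d) ≠ (tl p.1.1, σ p.1 p.2)) ∧
            (∀ p ∈ S, ∀ q ∈ S, p ≠ q →
              ({(hd p.1.1, p.2), (tl p.1.1, σ p.1 p.2)} : Finset (V × Fin d)) ∩
                {(hd q.1.1, q.2), (tl q.1.1, σ q.1 q.2)} = ∅)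
        then Polynomial.C ((-1 : ℝ)) ^ S.card *
          Polynomial.X ^ (Fintype.card V * d - 2 * S.card)
        else 0)
    (Mdg : Polynomial ℝ)
    (hMdg : Mdg = (Fintype.card ({e // e ∈ Eplus} → Equiv.Perm (Fin d)) : ℝ)⁻¹ •
      ∑ σ : {e // e ∈ Eplus} → Equiv.Perm (Fin d), matchPoly σ)
    (ρ : ℝ)
    (hHL : ∀ σ, (matchPoly σ).roots.card = Fintype.card V * d ∧
      ∀ x ∈ (matchPoly σ).roots, -ρ ≤ x ∧ x ≤ ρ) :
    ∀ x : ℝ, Mdg.IsRoot x → -ρ ≤ x ∧ x ≤ ρ :=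
  d_matching_polynomial_real_roots_in_ramanujan_interval_general V E hd tl Eplus d matchPoly hmp Mdg
    hMdg ρ hHL
end

section
/- Let X be a uniformly random element of S_{r−1} ≤ S_r (permutations fixing r), and for 1 ≤ j ≤ r−1 let Y_j be independent random permutations with Y_j = (j r) with probability 1/(r−j+1) and Y_j = id with probability (r−j)/(r−j+1). Then the product X·Y₁·Y₂⋯Y_{r−1} is uniformly distributed on S_r. -/
/-!
Write `P = Y₁ ⋯ Y_{r-1}`. Given `P`, the equation `X * P = g` forces `X = g * P⁻¹`, which lies
in `S_{r-1}` exactly when `P⁻¹ r = g⁻¹ r`; so it suffices that `P⁻¹ r` is uniform on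
`{1, …, r}`. Peeling off the first factor, `P⁻¹ r` is `1` with probability `1/r` (the later
swaps fix `1`), and otherwise it is `(Y₂ ⋯ Y_{r-1})⁻¹ r`, which by induction is uniform on the
remaining `r - 1` points.
-/

open Equiv Finset

theorem sum_mul_ite_mul_eq {G R : Type*} [Group G] [Fintype G] [DecidableEq G] [NonAssocSemiring R]
    (f : G → R) (h g : G) :
    ∑ x, f x * (if x * h = g then 1 else 0) = f (g * h⁻¹) := by
  simp_rw [← eq_mul_inv_iff_mul_eq, mul_ite, mul_one, mul_zero, sum_ite_eq', if_pos (mem_univ _)]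

section
variable {α : Type*} [Fintype α] [DecidableEq α]

def swapWeight (p q : ℝ) (b c : α) (y : Perm α) : ℝ :=
  if y = swap b c then p else if y = 1 then q else 0

/-- The probability that `(Y₀ ⋯ Y_{m-1})⁻¹ x = k` for independent `Y_j` with mass
functions `ν j`. -/
def invApplyMass {m : ℕ} (ν : Fin m → Perm α → ℝ) (x k : α) : ℝ :=
  ∑ y : Fin m → Perm α, (∏ j, ν j (y j)) * if ((List.ofFn y).prod)⁻¹ x = k then 1 else 0

theorem invApplyMass_zero (ν : Fin 0 → Perm α → ℝ) (x k : α) :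
    invApplyMass ν x k = if x = k then 1 else 0 := by
  simp [invApplyMass]

theorem invApplyMass_succ {m : ℕ} (ν : Fin (m + 1) → Perm α → ℝ) (x k : α) :
    invApplyMass ν x k = ∑ z, ν 0 z * invApplyMass (fun j => ν j.succ) (z⁻¹ x) k := by
  simp only [invApplyMass, Finset.mul_sum]
  rw [← (Fin.consEquiv fun _ => Perm α).sum_comp, Fintype.sum_prod_type]
  simp [Fin.consEquiv, Fin.prod_univ_succ, List.ofFn_succ]

theorem sum_swapWeight_mul {b c : α} (hbc : b ≠ c) (p q : ℝ) (f : Perm α → ℝ) :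
    ∑ z, swapWeight p q b c z * f z = p * f (swap b c) + q * f 1 := by
  have hswap : swap b c ≠ 1 := by simpa [swap_eq_one_iff] using hbc
  rw [Fintype.sum_eq_add _ _ hswap fun z hz => by simp [swapWeight, hz.1, hz.2]]
  simp [swapWeight, hswap.symm]

theorem invApplyMass_swapWeight_of_fixed {m : ℕ} (p q : Fin m → ℝ) (hpq : ∀ j, p j + q j = 1)
    (a : Fin m → α) (c : α) (ha : ∀ j, a j ≠ c) {x : α} (hxa : ∀ j, a j ≠ x) (hxc : x ≠ c)
    (k : α) :
    invApplyMass (fun j => swapWeight (p j) (q j) (a j) c) x k = if x = k then 1 else 0 := by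
  induction m with
  | zero => exact invApplyMass_zero _ x k
  | succ m ih =>
    rw [invApplyMass_succ, sum_swapWeight_mul (ha 0), swap_inv, inv_one, Perm.one_apply,
      swap_apply_of_ne_of_ne (hxa 0).symm hxc,
      ih (fun j => p j.succ) (fun j => q j.succ) (fun _ => hpq _) _ (fun _ => ha _)
        (fun _ => hxa _), ← add_mul, hpq, one_mul]

theorem one_div_add_sub_div_eq_one {m j : ℕ} (hj : j < m) :
    1 / ((m + 1 - j : ℕ) : ℝ) + ((m - j : ℕ) : ℝ) / ((m + 1 - j : ℕ) : ℝ) = 1 := by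
  rw [Nat.sub_add_comm hj.le, Nat.cast_add_one, ← add_div, add_comm, div_self (by positivity)]

theorem invApplyMass_swapWeight_uniform {m : ℕ} (a : Fin m → α) (c : α)
    (ha : Function.Injective a) (hac : ∀ j, a j ≠ c) (k : α) :
    invApplyMass (fun j => swapWeight (1 / ((m + 1 - j : ℕ) : ℝ))
        (((m - j : ℕ) : ℝ) / ((m + 1 - j : ℕ) : ℝ)) (a j) c) c k =
      if k = c ∨ k ∈ Set.range a then 1 / ((m : ℝ) + 1) else 0 := by
  induction m with
  | zero => simp [invApplyMass_zero, eq_comm]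
  | succ m ih =>
    rw [invApplyMass_succ, sum_swapWeight_mul (hac 0), swap_inv, inv_one, Perm.one_apply,
      swap_apply_right]
    simp only [Fin.val_succ, Nat.add_sub_add_right]
    rw [invApplyMass_swapWeight_of_fixed _ _ (fun j => one_div_add_sub_div_eq_one j.2) _ _
      (fun _ => hac _) (fun j => ha.ne (Fin.succ_ne_zero j)) (hac 0),
      ih (fun j => a j.succ) (ha.comp (Fin.succ_injective _)) (fun _ => hac _)]
    simp only [Set.mem_range, Fin.exists_fin_succ, Fin.val_zero, Nat.sub_zero]
    by_cases h0 : a 0 = k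
    · subst h0
      have h0_notMem : ¬ (a 0 = c ∨ ∃ j : Fin m, a j.succ = a 0) := by
        simpa [ha.eq_iff, Fin.succ_ne_zero] using hac 0
      simp [h0_notMem]
    · simp only [h0, false_or, if_false, mul_zero, zero_add, mul_ite]
      congr 1
      push_cast
      field_simp

end

/-- Let `X` be uniform on `S_{r-1} ≤ S_r` (here `r = n + 1`, and `S_{r-1}` is the
stabilizer of the last point), and let `Y₁, …, Y_{r-1}` be independent random permutations
where `Y_j` is the transposition `(j r)` with probability `1/(r - j + 1)` and the identity
otherwise.  Then the product `X · Y₁ ⋯ Y_{r-1}` is uniformly distributed on `S_r`.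
Distributions are given by their probability mass functions `μX` and `μY j`, and the
distribution of the product is the corresponding convolution. -/
theorem product_of_swaps_uniform (n : ℕ)
    (μX : Equiv.Perm (Fin (n + 1)) → ℝ)
    (hμX : ∀ x, μX x =
      if x (Fin.last n) = Fin.last n then (1 / (Nat.factorial n : ℝ)) else 0)
    (μY : Fin n → Equiv.Perm (Fin (n + 1)) → ℝ)
    (hμY : ∀ j y, μY j y =
      if y = Equiv.swap (Fin.castSucc j) (Fin.last n) then
        (1 / ((n + 1 - (j : ℕ) : ℕ) : ℝ))
      else if y = 1 then ((n - (j : ℕ) : ℕ) : ℝ) / ((n + 1 - (j : ℕ) : ℕ) : ℝ)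
      else 0) :
    ∀ g : Equiv.Perm (Fin (n + 1)),
      (∑ x : Equiv.Perm (Fin (n + 1)), ∑ y : Fin n → Equiv.Perm (Fin (n + 1)),
        (μX x * ∏ j, μY j (y j)) * (if x * (List.ofFn y).prod = g then 1 else 0)) =
        1 / (Nat.factorial (n + 1) : ℝ) := by
  intro g
  have hY : μY = fun j : Fin n => swapWeight (1 / ((n + 1 - j : ℕ) : ℝ))
      (((n - j : ℕ) : ℝ) / ((n + 1 - j : ℕ) : ℝ)) (Fin.castSucc j) (Fin.last n) :=
    funext₂ hμY
  have hX : ∀ h : Perm (Fin (n + 1)), μX (g * h⁻¹) =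
      1 / (Nat.factorial n : ℝ) * if h⁻¹ (Fin.last n) = g⁻¹ (Fin.last n) then 1 else 0 := by
    intro h
    simp only [hμX, Perm.mul_apply, ← Perm.eq_inv_iff_eq, mul_ite, mul_one, mul_zero]
  have hlast : g⁻¹ (Fin.last n) = Fin.last n ∨ g⁻¹ (Fin.last n) ∈ Set.range Fin.castSucc := by
    rcases Fin.eq_castSucc_or_eq_last (g⁻¹ (Fin.last n)) with ⟨j, hj⟩ | h
    exacts [Or.inr ⟨j, hj.symm⟩, Or.inl h]
  calc _ = ∑ y : Fin n → Perm (Fin (n + 1)),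
          μX (g * (List.ofFn y).prod⁻¹) * ∏ j, μY j (y j) := by
        rw [Finset.sum_comm]
        simp_rw [mul_right_comm _ (∏ j, _), ← Finset.sum_mul, sum_mul_ite_mul_eq]
    _ = 1 / (Nat.factorial n : ℝ) * invApplyMass μY (Fin.last n) (g⁻¹ (Fin.last n)) := by
        simp only [hX, invApplyMass, Finset.mul_sum]
        exact Finset.sum_congr rfl fun _ _ => by ring
    _ = 1 / (Nat.factorial (n + 1) : ℝ) := by
        rw [hY, invApplyMass_swapWeight_uniform _ _ (Fin.castSucc_injective n)
          (fun j => (Fin.castSucc_lt_last j).ne), if_pos hlast, Nat.factorial_succ]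
        push_cast
        field_simp
end
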